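/- arXiv:2509.24747 — 4 statements merged into one kernel-verified Lean document; each statement's English description precedes it below -/
import Mathlib

section
/- Let μ be a Borel probability measure on ℝ with compact support and let c* denote the maximum of its support. For c ∈ ℝ define K_c(X) := (1/c)·log(E[e^{cX}]) if c ≠ 0 and K_0(X) := E[X], and set Φ(X) := ∫_ℝ K_c(X) μ(dc) and ρ_Φ := −Φ on 𝒳. If I ⊆ ℝ is a nonempty open interval and v ∈ 𝒰(I) is a threshold utility satisfying R_v^A(x) ≤ −c* for all x ∈ I, then ρ_Φ is v-SD-consistent on 𝒳: for all X, Y ∈ 𝒳 ∩ 𝓛¹_v with X ≤_{v-SD} Y one has ρ_Φ(X) ≥ ρ_Φ(Y). In particular, this holds for v = 𝔢_c with c ≥ c*. -/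
open MeasureTheory Filter Set

noncomputable section

namespace Paper

variable {Ω : Type*} [MeasurableSpace Ω]

/-- The probability measure `P` is atomless. -/
def Atomless (P : Measure Ω) : Prop :=
  ∀ s : Set Ω, MeasurableSet s → 0 < P s →
    ∃ t : Set Ω, MeasurableSet t ∧ t ⊆ s ∧ 0 < P t ∧ P t < P s

/-- `𝒳`: the essentially bounded random variables. -/
def MemX (P : Measure Ω) (X : Ω → ℝ) : Prop :=
  Measurable X ∧ ∃ C : ℝ, ∀ᵐ ω ∂P, |X ω| ≤ C

/-- `𝒰(I)`: twice differentiable functions with everywhere positive first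
derivative on `I`. -/
def IsUtility (I : Set ℝ) (u : ℝ → ℝ) : Prop :=
  (∀ x ∈ I, DifferentiableAt ℝ u x) ∧
  (∀ x ∈ I, DifferentiableAt ℝ (deriv u) x) ∧
  (∀ x ∈ I, 0 < deriv u x)

/-- Arrow–Pratt coefficient of absolute risk aversion. -/
def RA (u : ℝ → ℝ) (x : ℝ) : ℝ := -deriv (deriv u) x / deriv u x

/-- `𝓛¹_v`: `I`-valued random variables `X` with `v(X)` integrable. -/
def MemL1 (P : Measure Ω) (I : Set ℝ) (v : ℝ → ℝ) (X : Ω → ℝ) : Prop :=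
  Measurable X ∧ (∀ᵐ ω ∂P, X ω ∈ I) ∧ Integrable (fun ω => v (X ω)) P

/-- The `v`-SD order: `X ≤_{v-SD} Y`. -/
def vSD (P : Measure Ω) (I : Set ℝ) (v : ℝ → ℝ) (X Y : Ω → ℝ) : Prop :=
  ∀ u : ℝ → ℝ, IsUtility I u → (∀ x ∈ I, RA v x ≤ RA u x) →
    Integrable (fun ω => u (X ω)) P → Integrable (fun ω => u (Y ω)) P →
    ∫ ω, u (X ω) ∂P ≤ ∫ ω, u (Y ω) ∂P

/-- Second-order stochastic dominance. -/
def SSD (P : Measure Ω) (X Y : Ω → ℝ) : Prop :=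
  ∀ u : ℝ → ℝ, IsUtility Set.univ u → ConcaveOn ℝ Set.univ u →
    Integrable (fun ω => u (X ω)) P → Integrable (fun ω => u (Y ω)) P →
    ∫ ω, u (X ω) ∂P ≤ ∫ ω, u (Y ω) ∂P

/-- Monetary risk measure: antitone and cash-additive on `𝒳`. -/
def IsRiskMeasure (P : Measure Ω) (ρ : (Ω → ℝ) → ℝ) : Prop :=
  (∀ X Y : Ω → ℝ, MemX P X → MemX P Y → (∀ᵐ ω ∂P, X ω ≤ Y ω) → ρ Y ≤ ρ X) ∧
  (∀ X : Ω → ℝ, MemX P X → ∀ c : ℝ, ρ (fun ω => X ω + c) = ρ X - c)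

/-- Worst-case risk measure `ρ^w(X) = ess sup (-X)`. -/
def rhoW (P : Measure Ω) (X : Ω → ℝ) : ℝ :=
  sInf {m : ℝ | ∀ᵐ ω ∂P, -X ω ≤ m}

/-- `v`-SD-consistency of `φ` on the domain `D`. -/
def VSDConsistent (P : Measure Ω) (I : Set ℝ) (v : ℝ → ℝ)
    (D : Set (Ω → ℝ)) (φ : (Ω → ℝ) → ℝ) : Prop :=
  ∀ X Y : Ω → ℝ, X ∈ D → Y ∈ D → MemL1 P I v X → MemL1 P I v Y →
    vSD P I v X Y → φ Y ≤ φ X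

/-- `𝒞`: the a.s. strictly positive bounded random variables. -/
def MemC (P : Measure Ω) (X : Ω → ℝ) : Prop :=
  MemX P X ∧ ∀ᵐ ω ∂P, 0 < X ω

/-- `𝓔 = {e^Y : Y ∈ 𝒳}` (up to a.s. equality). -/
def MemE (P : Measure Ω) (X : Ω → ℝ) : Prop :=
  ∃ Y : Ω → ℝ, MemX P Y ∧ ∀ᵐ ω ∂P, X ω = Real.exp (Y ω)

/-- Return risk measure. -/
def IsRRM (P : Measure Ω) (η : (Ω → ℝ) → ℝ) : Prop :=
  (∀ X : Ω → ℝ, MemC P X → 0 < η X) ∧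
  (∀ X Y : Ω → ℝ, MemC P X → MemC P Y → (∀ᵐ ω ∂P, X ω ≤ Y ω) → η Y ≤ η X) ∧
  (∀ X : Ω → ℝ, MemC P X → ∀ t : ℝ, 0 < t → η (fun ω => t * X ω) = t⁻¹ * η X)

/-- Loss-based return risk measure. -/
def IsLossRRM (P : Measure Ω) (κ : (Ω → ℝ) → ℝ) : Prop :=
  (∀ L : Ω → ℝ, MemC P L → 0 < κ L) ∧
  (∀ L L' : Ω → ℝ, MemC P L → MemC P L' → (∀ᵐ ω ∂P, L' ω ≤ L ω) → κ L' ≤ κ L) ∧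
  (∀ L : Ω → ℝ, MemC P L → ∀ t : ℝ, 0 < t → κ (fun ω => t * L ω) = t * κ L)

/-- Base risk measure `ρ_{Z,v}`. -/
def baseRM (P : Measure Ω) (v : ℝ → ℝ) (Z X : Ω → ℝ) : ℝ :=
  sInf {m : ℝ | vSD P Set.univ v Z (fun ω => X ω + m)}

/-- Lower quantile function. -/
def qf (P : Measure Ω) (X : Ω → ℝ) (r : ℝ) : ℝ :=
  sInf {x : ℝ | r ≤ (P {ω | X ω ≤ x}).toReal}

/-- Expected Shortfall at level `p`. -/
def ES (P : Measure Ω) (p : ℝ) (X : Ω → ℝ) : ℝ :=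
  if p < 1 then -(1 / (1 - p)) * ∫ r in (0:ℝ)..(1 - p), qf P X r
  else rhoW P X

/-- Topological support of a Borel measure on `ℝ`. -/
def msupport (μ : Measure ℝ) : Set ℝ := {c : ℝ | ∀ ε > 0, 0 < μ (Metric.ball c ε)}

/-- The certainty equivalent `K_c`. -/
def Kc (P : Measure Ω) (c : ℝ) (X : Ω → ℝ) : ℝ :=
  if c = 0 then ∫ ω, X ω ∂P
  else (1 / c) * Real.log (∫ ω, Real.exp (c * X ω) ∂P)

/-- The exponential (CARA) utility `𝔢_c`. -/
def caraUtil (c : ℝ) : ℝ → ℝ :=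
  if 0 < c then fun x => Real.exp (c * x)
  else if c = 0 then fun x => x
  else fun x => -Real.exp (c * x)

/-!
For every `c ≤ c*` the CARA utility `𝔢_c` has risk aversion `-c ≥ -c* ≥ R_v^A`, so it is
admissible in the definition of `X ≤_{v-SD} Y` and gives `E[𝔢_c(X)] ≤ E[𝔢_c(Y)]`. Since
`K_c(X) = 𝔢_c⁻¹(E[𝔢_c(X)])` with `𝔢_c` strictly increasing, this is `K_c(X) ≤ K_c(Y)`.
Integrating over `μ`, which is concentrated on `(-∞, c*]`, gives `Φ(X) ≤ Φ(Y)`.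
-/

lemma exists_hasDerivAt_caraUtil (c : ℝ) :
    ∃ a > 0, ∀ x, HasDerivAt (caraUtil c) (a * Real.exp (c * x)) x := by
  have hexp (x : ℝ) : HasDerivAt (fun y => Real.exp (c * y)) (c * Real.exp (c * x)) x := by
    simpa [mul_comm] using ((hasDerivAt_id x).const_mul c).exp
  unfold caraUtil
  split_ifs with hpos hzero
  · exact ⟨c, hpos, hexp⟩
  · subst hzero
    exact ⟨1, one_pos, fun x => by simpa using hasDerivAt_id' x⟩
  · refine ⟨-c, neg_pos.2 (lt_of_le_of_ne (not_lt.1 hpos) hzero), fun x => ?_⟩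
    simpa [neg_mul] using (hexp x).fun_neg

lemma isUtility_of_hasDerivAt_exp {u : ℝ → ℝ} {a c : ℝ} (ha : 0 < a)
    (hu : ∀ x, HasDerivAt u (a * Real.exp (c * x)) x) (I : Set ℝ) : IsUtility I u := by
  have hderiv : deriv u = fun x => a * Real.exp (c * x) := funext fun x => (hu x).deriv
  refine ⟨fun x _ => (hu x).differentiableAt, fun x _ => ?_, fun x _ => ?_⟩
  · rw [hderiv]
    fun_prop
  · rw [hderiv]
    positivity

lemma RA_of_hasDerivAt_exp {u : ℝ → ℝ} {a c : ℝ} (ha : a ≠ 0)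
    (hu : ∀ x, HasDerivAt u (a * Real.exp (c * x)) x) (x : ℝ) : RA u x = -c := by
  have hderiv : deriv u = fun x => a * Real.exp (c * x) := funext fun x => (hu x).deriv
  have hderiv2 : deriv (deriv u) x = a * (c * Real.exp (c * x)) := by
    rw [hderiv]
    simpa [mul_comm] using (((hasDerivAt_id x).const_mul c).exp.const_mul a).deriv
  rw [RA, hderiv2, hderiv]
  field_simp

lemma isUtility_caraUtil (c : ℝ) (I : Set ℝ) : IsUtility I (caraUtil c) :=
  let ⟨_, ha, hu⟩ := exists_hasDerivAt_caraUtil c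
  isUtility_of_hasDerivAt_exp ha hu I

lemma RA_caraUtil (c x : ℝ) : RA (caraUtil c) x = -c :=
  let ⟨_, ha, hu⟩ := exists_hasDerivAt_caraUtil c
  RA_of_hasDerivAt_exp ha.ne' hu x

lemma continuous_caraUtil (c : ℝ) : Continuous (caraUtil c) :=
  let ⟨_, _, hu⟩ := exists_hasDerivAt_caraUtil c
  continuous_iff_continuousAt.2 fun x => (hu x).continuousAt

lemma strictMono_caraUtil (c : ℝ) : StrictMono (caraUtil c) :=
  strictMono_of_deriv_pos fun x => (isUtility_caraUtil c Set.univ).2.2 x trivial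

lemma Kc_const (P : Measure Ω) [IsProbabilityMeasure P] (c a : ℝ) :
    Kc P c (fun _ => a) = a := by
  unfold Kc
  split_ifs with hc
  · simp
  · simp only [integral_const, probReal_univ, one_smul, Real.log_exp]
    field_simp

lemma MemX.const {P : Measure Ω} (a : ℝ) : MemX P (fun _ => a) :=
  ⟨measurable_const, |a|, ae_of_all _ fun _ => le_rfl⟩

section MemX

variable {P : Measure Ω} [IsProbabilityMeasure P] {X Y : Ω → ℝ}

lemma MemX.integrable_comp (hX : MemX P X) {f : ℝ → ℝ} (hf : Continuous f) :
    Integrable (fun ω => f (X ω)) P := by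
  obtain ⟨hm, C, hC⟩ := hX
  obtain ⟨B, hB⟩ := (isCompact_Icc (a := -C) (b := C)).exists_bound_of_continuousOn
    hf.continuousOn
  refine .of_bound (hf.measurable.comp hm).aestronglyMeasurable B ?_
  filter_upwards [hC] with ω hω using hB _ (abs_le.1 hω)

lemma MemX.Kc_le_Kc_of_integral_caraUtil_le (hX : MemX P X) (hY : MemX P Y) {c : ℝ}
    (h : ∫ ω, caraUtil c (X ω) ∂P ≤ ∫ ω, caraUtil c (Y ω) ∂P) : Kc P c X ≤ Kc P c Y := by
  have hpos {Z : Ω → ℝ} (hZ : MemX P Z) : 0 < ∫ ω, Real.exp (c * Z ω) ∂P :=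
    integral_exp_pos (hZ.integrable_comp (by fun_prop : Continuous fun x => Real.exp (c * x)))
  rcases lt_trichotomy c 0 with hc | rfl | hc
  · simp only [caraUtil, if_neg hc.not_gt, if_neg hc.ne, integral_neg, neg_le_neg_iff] at h
    simp only [Kc, if_neg hc.ne]
    exact mul_le_mul_of_nonpos_left (Real.log_le_log (hpos hY) h) (one_div_neg.2 hc).le
  · simpa [Kc, caraUtil] using h
  · simp only [caraUtil, if_pos hc] at h
    simp only [Kc, if_neg hc.ne']
    exact mul_le_mul_of_nonneg_left (Real.log_le_log (hpos hX) h) (one_div_pos.2 hc).le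

lemma MemX.Kc_mono (hX : MemX P X) (hY : MemX P Y) (hXY : X ≤ᵐ[P] Y) (c : ℝ) :
    Kc P c X ≤ Kc P c Y :=
  hX.Kc_le_Kc_of_integral_caraUtil_le hY <|
    integral_mono_ae (hX.integrable_comp (continuous_caraUtil c))
      (hY.integrable_comp (continuous_caraUtil c))
      (hXY.mono fun _ h => (strictMono_caraUtil c).monotone h)

lemma MemX.abs_Kc_le (hX : MemX P X) {C : ℝ} (hC : ∀ᵐ ω ∂P, |X ω| ≤ C) (c : ℝ) :
    |Kc P c X| ≤ C := by
  have hlow := (MemX.const (-C)).Kc_mono hX (hC.mono fun _ h => (abs_le.1 h).1) c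
  have hup := hX.Kc_mono (MemX.const C) (hC.mono fun _ h => (abs_le.1 h).2) c
  rw [Kc_const] at hlow hup
  exact abs_le.2 ⟨hlow, hup⟩

lemma measurable_Kc (hX : Measurable X) : Measurable fun c => Kc P c X := by
  have hmgf : Measurable fun c : ℝ => ∫ ω, Real.exp (c * X ω) ∂P :=
    (StronglyMeasurable.integral_prod_right (f := fun c ω => Real.exp (c * X ω))
      (Real.measurable_exp.comp
        (measurable_fst.mul (hX.comp measurable_snd))).stronglyMeasurable).measurable
  unfold Kc
  exact Measurable.ite measurableSet_eq measurable_const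
    ((measurable_const.div measurable_id).mul (Real.measurable_log.comp hmgf))

lemma MemX.integrable_Kc (hX : MemX P X) (μ : Measure ℝ) [IsFiniteMeasure μ] :
    Integrable (fun c => Kc P c X) μ := by
  obtain ⟨C, hC⟩ := hX.2
  exact .of_bound (measurable_Kc hX.1).aestronglyMeasurable C
    (ae_of_all _ fun c => hX.abs_Kc_le hC c)

lemma Kc_le_Kc_of_vSD {I : Set ℝ} {v : ℝ → ℝ} {c : ℝ} (hRA : ∀ x ∈ I, RA v x ≤ -c)
    (hX : MemX P X) (hY : MemX P Y) (hXY : vSD P I v X Y) : Kc P c X ≤ Kc P c Y :=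
  hX.Kc_le_Kc_of_integral_caraUtil_le hY <|
    hXY _ (isUtility_caraUtil c I) (fun x hx => (RA_caraUtil c x).symm ▸ hRA x hx)
      (hX.integrable_comp (continuous_caraUtil c)) (hY.integrable_comp (continuous_caraUtil c))

theorem vSDConsistent_neg_integral_Kc {μ : Measure ℝ} [IsFiniteMeasure μ] {cstar : ℝ}
    (hμ : ∀ᵐ c ∂μ, c ≤ cstar) {I : Set ℝ} {v : ℝ → ℝ} (hRA : ∀ x ∈ I, RA v x ≤ -cstar) :
    VSDConsistent P I v {X | MemX P X} (fun X => -∫ c, Kc P c X ∂μ) := by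
  intro X Y hX hY _ _ hXY
  refine neg_le_neg (integral_mono_ae (hX.integrable_Kc μ) (hY.integrable_Kc μ) ?_)
  filter_upwards [hμ] with c hc
  exact Kc_le_Kc_of_vSD (fun x hx => (hRA x hx).trans (neg_le_neg hc)) hX hY hXY

end MemX

theorem statement1_general (P : Measure Ω) [IsProbabilityMeasure P]
    (μ : Measure ℝ) [IsProbabilityMeasure μ]
    (hnull : μ (msupport μ)ᶜ = 0)
    (cstar : ℝ) (hcstar : IsGreatest (msupport μ) cstar)
    (I : Set ℝ)
    (v : ℝ → ℝ) (hRA : ∀ x ∈ I, RA v x ≤ -cstar) :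
    VSDConsistent P I v {X | MemX P X} (fun X => -∫ c, Kc P c X ∂μ) ∧
    (∀ c : ℝ, cstar ≤ c →
      VSDConsistent P Set.univ (caraUtil c) {X | MemX P X}
        (fun X => -∫ c', Kc P c' X ∂μ)) := by
  have hμ : ∀ᵐ c ∂μ, c ≤ cstar := (show ∀ᵐ c ∂μ, c ∈ msupport μ from hnull).mono
    fun _ hc => hcstar.2 hc
  refine ⟨vSDConsistent_neg_integral_Kc hμ hRA, fun c hc => ?_⟩
  exact vSDConsistent_neg_integral_Kc hμ fun x _ => by rw [RA_caraUtil]; linarith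

/-- If `μ` is a compactly supported Borel probability measure on
`ℝ` with maximum of support `cstar`, `Φ(X) = ∫ K_c(X) μ(dc)` and `ρ_Φ = -Φ`, and
`v ∈ 𝒰(I)` satisfies `R_v^A ≤ -cstar` on `I`, then `ρ_Φ` is `v`-SD-consistent on
`𝒳`; in particular this holds for `v = 𝔢_c` with `c ≥ cstar`. -/
theorem statement1 (P : Measure Ω) [IsProbabilityMeasure P] (hP : Atomless P)
    (μ : Measure ℝ) [IsProbabilityMeasure μ]
    (hcomp : IsCompact (msupport μ)) (hnull : μ (msupport μ)ᶜ = 0)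
    (cstar : ℝ) (hcstar : IsGreatest (msupport μ) cstar)
    (I : Set ℝ) (hIopen : IsOpen I) (hIconn : I.OrdConnected) (hIne : I.Nonempty)
    (v : ℝ → ℝ) (hv : IsUtility I v) (hRA : ∀ x ∈ I, RA v x ≤ -cstar) :
    VSDConsistent P I v {X | MemX P X} (fun X => -∫ c, Kc P c X ∂μ) ∧
    (∀ c : ℝ, cstar ≤ c →
      VSDConsistent P Set.univ (caraUtil c) {X | MemX P X}
        (fun X => -∫ c', Kc P c' X ∂μ)) :=
  statement1_general P μ hnull cstar hcstar I v hRA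

end Paper
end
end

section
/- A monetary risk measure ρ: 𝒳 → ℝ is SSD-consistent (equivalently, 𝔢₀-SD-consistent) if and only if there exists a family 𝒢 of nondecreasing functions g: [0,1] → ℝ such that for all X ∈ 𝒳, ρ(X) = inf_{g∈𝒢} sup_{p∈[0,1]} ( ES_p(X) − g(p) ). -/
/-!
For bounded `X` and `Y`, `X ≤_SSD Y` holds iff `ES_p(Y) ≤ ES_p(X)` for every `p ∈ [0,1]`, i.e. iff
`∫₀ᵗ q_X ≤ ∫₀ᵗ q_Y` for every `t ∈ (0,1]`, where `q` is the quantile function; under Lebesgue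
measure on `(0,1]` the quantile function has the law of the variable. Testing SSD on the smooth
concave utilities `softMin c q`, which approximate `x ↦ min x q`, gives
`E[min(X,q)] ≤ E[min(Y,q)]`, and taking `q = q_X(t)` yields the quantile inequality. Conversely,
for a concave `u` the tangent at `q_X` gives `u(q_Y) ≤ u(q_X) - u'(q_X) (q_X - q_Y)`; the weight
`u' ∘ q_X` is nonnegative and decreasing, so by the layer-cake formula the weighted integral is an
average of the partial integrals `∫₀ᵗ (q_X - q_Y) ≥ 0`.

For the representation take `𝒢 = {p ↦ ES_p(Z) - ρ(Z) : Z ∈ 𝒳}`. If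
`m = sup_p (ES_p(X) - ES_p(Z) + ρ(Z))`, then `Z + ρ(Z) - m ≤_SSD X`, so SSD-consistency and
cash-additivity give `ρ(X) ≤ m`, with equality for `Z = X`. Conversely, every `ES_p` is
SSD-consistent.
-/

open MeasureTheory Filter Set

noncomputable section

open ProbabilityTheory

lemma nonneg_of_ae_abs_le {α : Type*} [MeasurableSpace α] {μ : Measure α} [NeZero μ]
    {f : α → ℝ} {C : ℝ} (hC : ∀ᵐ a ∂μ, |f a| ≤ C) : 0 ≤ C :=
  hC.exists.elim fun _ h => (abs_nonneg _).trans h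

lemma setIntegral_Ioc_le_mul {f : ℝ → ℝ} {a b M : ℝ} (hab : a ≤ b)
    (hf : IntegrableOn f (Ioc a b)) (h : ∀ r ∈ Ioc a b, f r ≤ M) :
    ∫ r in Ioc a b, f r ≤ (b - a) * M := by
  have := setIntegral_mono_on hf (integrableOn_const measure_Ioc_lt_top.ne) measurableSet_Ioc h
  rwa [setIntegral_const, Real.volume_real_Ioc_of_le hab, smul_eq_mul] at this

lemma mul_le_setIntegral_Ioc {f : ℝ → ℝ} {a b M : ℝ} (hab : a ≤ b)
    (hf : IntegrableOn f (Ioc a b)) (h : ∀ r ∈ Ioc a b, M ≤ f r) :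
    (b - a) * M ≤ ∫ r in Ioc a b, f r := by
  have := setIntegral_mono_on (integrableOn_const measure_Ioc_lt_top.ne) hf measurableSet_Ioc h
  rwa [setIntegral_const, Real.volume_real_Ioc_of_le hab, smul_eq_mul] at this

lemma setIntegral_Ioc_add_setIntegral_Ioc {f : ℝ → ℝ} {a b c : ℝ} (hab : a ≤ b) (hbc : b ≤ c)
    (hf : IntegrableOn f (Ioc a c)) :
    (∫ r in Ioc a b, f r) + ∫ r in Ioc b c, f r = ∫ r in Ioc a c, f r := by
  rw [← Ioc_union_Ioc_eq_Ioc hab hbc] at hf ⊢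
  exact (setIntegral_union (Ioc_disjoint_Ioc_of_le le_rfl) measurableSet_Ioc
    hf.left_of_union hf.right_of_union).symm

lemma MonotoneOn.setIntegral_Ioc_div_le {f : ℝ → ℝ} {s t b : ℝ} (hf : MonotoneOn f (Ioc 0 b))
    (hfi : IntegrableOn f (Ioc 0 b)) (hs : 0 < s) (hst : s ≤ t) (htb : t ≤ b) :
    (∫ r in Ioc 0 s, f r) / s ≤ (∫ r in Ioc 0 t, f r) / t := by
  have hhead : ∫ r in Ioc 0 s, f r ≤ (s - 0) * f s :=
    setIntegral_Ioc_le_mul hs.le (hfi.mono_set (Ioc_subset_Ioc_right (hst.trans htb)))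
      fun r hr => hf ⟨hr.1, hr.2.trans (hst.trans htb)⟩ ⟨hs, hst.trans htb⟩ hr.2
  have htail : (t - s) * f s ≤ ∫ r in Ioc s t, f r :=
    mul_le_setIntegral_Ioc hst (hfi.mono_set (Ioc_subset_Ioc hs.le htb))
      fun r hr => hf ⟨hs, hst.trans htb⟩ ⟨hs.trans hr.1, hr.2.trans htb⟩ hr.1.le
  rw [← setIntegral_Ioc_add_setIntegral_Ioc hs.le hst (hfi.mono_set (Ioc_subset_Ioc_right htb)),
    div_le_div_iff₀ hs (hs.trans_le hst)]
  nlinarith [mul_le_mul_of_nonneg_left hhead (sub_nonneg.mpr hst),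
    mul_le_mul_of_nonneg_left htail hs.le]

lemma Monotone.abs_le_max_of_abs_le {u : ℝ → ℝ} (hu : Monotone u) {x B : ℝ} (hx : |x| ≤ B) :
    |u x| ≤ max |u (-B)| |u B| := by
  have h1 := hu (neg_le_of_abs_le hx)
  have h2 := hu ((le_abs_self x).trans hx)
  rw [abs_le]
  constructor <;> cases abs_cases (u (-B)) <;> cases abs_cases (u B) <;>
    linarith [le_max_left |u (-B)| |u B|, le_max_right |u (-B)| |u B|]

lemma Monotone.integrable_comp {α : Type*} [MeasurableSpace α] {μ : Measure α} [IsFiniteMeasure μ]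
    {u : ℝ → ℝ} (hu : Monotone u) (huc : Continuous u) {f : α → ℝ} (hf : Measurable f) {B : ℝ}
    (hB : ∀ᵐ a ∂μ, |f a| ≤ B) : Integrable (fun a => u (f a)) μ :=
  .of_bound (huc.measurable.comp hf).aestronglyMeasurable _
    (hB.mono fun _ h => Monotone.abs_le_max_of_abs_le hu h)

lemma ConcaveOn.le_add_deriv_mul_sub {u : ℝ → ℝ} {S : Set ℝ} (hu : ConcaveOn ℝ S u) {a b : ℝ}
    (ha : a ∈ S) (hb : b ∈ S) (hdiff : DifferentiableAt ℝ u b) :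
    u a ≤ u b + deriv u b * (a - b) := by
  rcases lt_trichotomy a b with hab | rfl | hab
  · have := hu.deriv_le_slope ha hb hab hdiff
    rw [slope_def_field, le_div_iff₀ (sub_pos.mpr hab)] at this
    linarith
  · simp
  · have := hu.slope_le_deriv hb ha hab hdiff
    rw [slope_def_field, div_le_iff₀ (sub_pos.mpr hab)] at this
    linarith

lemma exists_ae_eq_Ioc_of_downward_closed {A : Set ℝ} (hA : A ⊆ Ioc 0 1)
    (hdown : ∀ a ∈ A, ∀ r, 0 < r → r ≤ a → r ∈ A) :
    ∃ t ∈ Icc (0 : ℝ) 1, A =ᵐ[volume] Ioc 0 t := by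
  have hle : ∀ x ∈ insert 0 A, x ≤ 1 := by
    rintro x (rfl | hx)
    exacts [zero_le_one, (hA hx).2]
  have hbdd : BddAbove (insert 0 A) := ⟨1, hle⟩
  refine ⟨sSup (insert 0 A), ⟨le_csSup hbdd (mem_insert _ _),
    csSup_le (insert_nonempty _ _) hle⟩, ?_⟩
  have hsub : A ⊆ Ioc 0 (sSup (insert 0 A)) := fun r hr =>
    ⟨(hA hr).1, le_csSup hbdd (mem_insert_of_mem _ hr)⟩
  have hsup : Ioo 0 (sSup (insert 0 A)) ⊆ A := fun r hr => by
    obtain ⟨a, ha, hra⟩ := exists_lt_of_lt_csSup (insert_nonempty _ _) hr.2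
    rcases ha with rfl | ha
    exacts [absurd hr.1 hra.not_gt, hdown a ha r hr.1 hra.le]
  exact hsub.eventuallyLE.antisymm (Ioo_ae_eq_Ioc.symm.le.trans hsup.eventuallyLE)

lemma setIntegral_mul_eq_integral_setIntegral_superlevel {w h : ℝ → ℝ} {M : ℝ}
    (hw : Measurable w) (hw0 : ∀ r, 0 ≤ w r) (hwM : ∀ r, w r ≤ M)
    (hh : IntegrableOn h (Ioc 0 1)) :
    ∫ r in Ioc 0 1, w r * h r = ∫ s in Ioc 0 M, ∫ r in {r | s < w r} ∩ Ioc 0 1, h r := by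
  set S : Set (ℝ × ℝ) := {z | z.2 < w z.1}
  have hS : MeasurableSet S := measurableSet_lt measurable_snd (hw.comp measurable_fst)
  have hF : Integrable (fun z : ℝ × ℝ => S.indicator (fun z => h z.1) z)
      ((volume.restrict (Ioc 0 1)).prod (volume.restrict (Ioc 0 M))) :=
    (hh.comp_fst _).indicator hS
  have hinner : ∀ r, ∫ s in Ioc 0 M, S.indicator (fun z => h z.1) (r, s) = w r * h r := by
    intro r
    have hset : Iio (w r) ∩ Ioc 0 M = Ioo 0 (w r) := by
      ext s
      simp only [mem_inter_iff, mem_Iio, mem_Ioc, mem_Ioo]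
      exact ⟨fun ⟨h1, h2, _⟩ => ⟨h2, h1⟩, fun ⟨h1, h2⟩ => ⟨h2, h1, h2.le.trans (hwM r)⟩⟩
    change ∫ s in Ioc 0 M, (Iio (w r)).indicator (fun _ => h r) s = _
    rw [integral_indicator measurableSet_Iio, setIntegral_const, measureReal_restrict_apply
      measurableSet_Iio, hset, Real.volume_real_Ioo_of_le (hw0 r), sub_zero, smul_eq_mul]
  simp_rw [← hinner]
  rw [integral_integral_swap hF]
  refine setIntegral_congr_fun measurableSet_Ioc fun s _ => ?_
  change ∫ r in Ioc 0 1, {r | s < w r}.indicator h r = _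
  rw [integral_indicator (measurableSet_lt measurable_const hw), Measure.restrict_restrict
    (measurableSet_lt measurable_const hw)]

lemma setIntegral_mul_nonneg_of_antitoneOn {w h : ℝ → ℝ} {M : ℝ} (hw : Measurable w)
    (hwa : AntitoneOn w (Ioc 0 1)) (hw0 : ∀ r, 0 ≤ w r) (hwM : ∀ r, w r ≤ M)
    (hh : IntegrableOn h (Ioc 0 1)) (hH : ∀ t ∈ Ioc (0 : ℝ) 1, 0 ≤ ∫ r in Ioc 0 t, h r) :
    0 ≤ ∫ r in Ioc 0 1, w r * h r := by
  rw [setIntegral_mul_eq_integral_setIntegral_superlevel hw hw0 hwM hh]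
  refine setIntegral_nonneg measurableSet_Ioc fun s _ => ?_
  obtain ⟨t, ht, hAt⟩ := exists_ae_eq_Ioc_of_downward_closed (A := {r | s < w r} ∩ Ioc 0 1)
    inter_subset_right fun a ha r hr hra =>
      ⟨ha.1.trans_le (hwa ⟨hr, hra.trans ha.2.2⟩ ha.2 hra), hr, hra.trans ha.2.2⟩
  rw [setIntegral_congr_set hAt]
  rcases ht.1.eq_or_lt with rfl | ht0
  · simp
  · exact hH t ⟨ht0, ht.2⟩

lemma ConcaveOn.setIntegral_comp_le_of_setIntegral_Ioc_le {u f g : ℝ → ℝ} {B : ℝ}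
    (hconc : ConcaveOn ℝ univ u) (hdiff : Differentiable ℝ u) (hu' : ∀ x, 0 ≤ deriv u x)
    (hf : Measurable f) (hg : Measurable g) (hfB : ∀ r, |f r| ≤ B) (hgB : ∀ r, |g r| ≤ B)
    (hgm : MonotoneOn g (Ioc 0 1))
    (hH : ∀ t ∈ Ioc (0 : ℝ) 1, ∫ r in Ioc 0 t, f r ≤ ∫ r in Ioc 0 t, g r) :
    ∫ r in Ioc 0 1, u (f r) ≤ ∫ r in Ioc 0 1, u (g r) := by
  have hu : Monotone u := monotone_of_deriv_nonneg hdiff hu'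
  have hu'a : Antitone (deriv u) := fun a b hab =>
    hconc.antitoneOn_deriv (fun x _ => hdiff x) trivial trivial hab
  have hfi : IntegrableOn f (Ioc 0 1) :=
    Measure.integrableOn_of_bounded measure_Ioc_lt_top.ne hf.aestronglyMeasurable (ae_of_all _ hfB)
  have hgi : ∀ t, IntegrableOn g (Ioc 0 t) := fun t =>
    Measure.integrableOn_of_bounded measure_Ioc_lt_top.ne hg.aestronglyMeasurable (ae_of_all _ hgB)
  set w := fun r => deriv u (g r)
  have hw : Measurable w := (measurable_deriv u).comp hg
  have hwM : ∀ r, w r ≤ deriv u (-B) := fun r => hu'a (neg_le_of_abs_le (hgB r))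
  have hwh : IntegrableOn (fun r => w r * (g r - f r)) (Ioc 0 1) :=
    ((hgi 1).sub hfi).bdd_mul hw.aestronglyMeasurable
      (ae_of_all _ fun r => (abs_of_nonneg (hu' _)).trans_le (hwM r))
  have hweighted : 0 ≤ ∫ r in Ioc 0 1, w r * (g r - f r) :=
    setIntegral_mul_nonneg_of_antitoneOn hw (fun a ha b hb hab => hu'a (hgm ha hb hab))
      (fun r => hu' _) hwM ((hgi 1).sub hfi) fun t ht => by
        rw [integral_sub (hgi t) (hfi.mono_set (Ioc_subset_Ioc_right ht.2))]
        linarith [hH t ht]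
  have hint : ∀ {v : ℝ → ℝ}, Measurable v → (∀ r, |v r| ≤ B) →
      IntegrableOn (fun r => u (v r)) (Ioc 0 1) := fun hv hvB =>
    Monotone.integrable_comp hu hdiff.continuous hv (ae_of_all _ hvB)
  calc ∫ r in Ioc 0 1, u (f r) ≤ ∫ r in Ioc 0 1, (u (g r) - w r * (g r - f r)) :=
        setIntegral_mono_on (hint hf hfB) ((hint hg hgB).sub hwh) measurableSet_Ioc fun r _ => by
          linarith [hconc.le_add_deriv_mul_sub (mem_univ (f r)) trivial (hdiff (g r))]
    _ ≤ ∫ r in Ioc 0 1, u (g r) := by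
        rw [integral_sub (hint hg hgB) hwh]
        linarith

lemma Real.iInf_le_iInf_of_le_of_le_add {ι : Type*} [Nonempty ι] {a b : ι → ℝ} {K : ℝ}
    (hab : ∀ i, a i ≤ b i) (hba : ∀ i, b i ≤ a i + K) : ⨅ i, a i ≤ ⨅ i, b i := by
  by_cases ha : BddBelow (range a)
  · exact le_ciInf fun i => (ciInf_le ha i).trans (hab i)
  · have hb : ¬BddBelow (range b) := fun ⟨c, hc⟩ => ha ⟨c - K, by
      rintro _ ⟨i, rfl⟩
      linarith [hc (mem_range_self i), hba i]⟩
    rw [Real.iInf_of_not_bddBelow ha, Real.iInf_of_not_bddBelow hb]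

lemma max_le_log_one_add_exp (a : ℝ) : max a 0 ≤ Real.log (1 + Real.exp a) := by
  refine max_le ?_ (Real.log_nonneg (by linarith [Real.exp_pos a]))
  calc a = Real.log (Real.exp a) := (Real.log_exp a).symm
    _ ≤ _ := Real.log_le_log (Real.exp_pos a) (by linarith)

lemma log_one_add_exp_le (a : ℝ) : Real.log (1 + Real.exp a) ≤ max a 0 + Real.log 2 := by
  have h : 1 + Real.exp a ≤ 2 * Real.exp (max a 0) := by
    have := Real.one_le_exp (le_max_right a 0)
    linarith [Real.exp_le_exp.mpr (le_max_left a 0)]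
  calc Real.log (1 + Real.exp a) ≤ Real.log (2 * Real.exp (max a 0)) :=
        Real.log_le_log (by positivity) h
    _ = max a 0 + Real.log 2 := by
        rw [Real.log_mul two_ne_zero (Real.exp_pos _).ne', Real.log_exp, add_comm]

def softMin (c q x : ℝ) : ℝ := q - Real.log (1 + Real.exp (c * (q - x))) / c

section SoftMin

variable {c : ℝ} (q : ℝ)

lemma hasDerivAt_softMin (hc : c ≠ 0) (x : ℝ) :
    HasDerivAt (softMin c q) (Real.exp (c * (q - x)) / (1 + Real.exp (c * (q - x)))) x := by
  have hin : HasDerivAt (fun x => 1 + Real.exp (c * (q - x))) (Real.exp (c * (q - x)) * -c) x := by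
    simpa using (((hasDerivAt_id x).const_sub q).const_mul c).exp.const_add 1
  exact (((hin.log (by positivity)).div_const c).const_sub q).congr_deriv (by field_simp)

lemma deriv_softMin (hc : c ≠ 0) :
    deriv (softMin c q) = fun x => Real.exp (c * (q - x)) / (1 + Real.exp (c * (q - x))) :=
  funext fun x => (hasDerivAt_softMin q hc x).deriv

lemma hasDerivAt_deriv_softMin (hc : c ≠ 0) (x : ℝ) :
    HasDerivAt (deriv (softMin c q))
      (-(c * Real.exp (c * (q - x))) / (1 + Real.exp (c * (q - x))) ^ 2) x := by
  have hE : HasDerivAt (fun x => Real.exp (c * (q - x))) (Real.exp (c * (q - x)) * -c) x := by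
    simpa using (((hasDerivAt_id x).const_sub q).const_mul c).exp
  rw [deriv_softMin q hc]
  exact (hE.div (hE.const_add 1) (by positivity)).congr_deriv (by ring)

lemma concaveOn_softMin (hc : 0 < c) : ConcaveOn ℝ univ (softMin c q) := by
  refine concaveOn_univ_of_deriv2_nonpos (fun x => (hasDerivAt_softMin q hc.ne' x).differentiableAt)
    (fun x => (hasDerivAt_deriv_softMin q hc.ne' x).differentiableAt) fun x => ?_
  rw [Function.iterate_succ_apply, Function.iterate_one,
    (hasDerivAt_deriv_softMin q hc.ne' x).deriv]
  exact div_nonpos_of_nonpos_of_nonneg (neg_nonpos.mpr (by positivity)) (by positivity)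

lemma monotone_softMin (hc : c ≠ 0) : Monotone (softMin c q) :=
  (strictMono_of_deriv_pos fun x => by rw [deriv_softMin q hc]; positivity).monotone

lemma continuous_softMin (hc : c ≠ 0) : Continuous (softMin c q) :=
  continuous_iff_continuousAt.mpr fun x => (hasDerivAt_softMin q hc x).continuousAt

lemma softMin_le_min (hc : 0 < c) (x : ℝ) : softMin c q x ≤ min x q := by
  have key : (q - min x q) * c ≤ Real.log (1 + Real.exp (c * (q - x))) := by
    refine le_trans ?_ (max_le_log_one_add_exp _)
    rcases le_total x q with hxq | hqx
    · rw [min_eq_left hxq]; linarith [le_max_left (c * (q - x)) 0]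
    · rw [min_eq_right hqx]; simp
  rw [← le_div_iff₀ hc] at key
  rw [softMin]
  linarith

lemma min_sub_le_softMin (hc : 0 < c) (x : ℝ) : min x q - Real.log 2 / c ≤ softMin c q x := by
  have key : Real.log (1 + Real.exp (c * (q - x))) ≤ (q - min x q) * c + Real.log 2 := by
    refine (log_one_add_exp_le _).trans (add_le_add_left ?_ _)
    rcases le_total x q with hxq | hqx
    · rw [min_eq_left hxq, max_eq_left (by nlinarith)]; linarith
    · rw [min_eq_right hqx, max_eq_right (by nlinarith)]; simp
  have := div_le_div_of_nonneg_right key hc.le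
  rw [add_div, mul_div_assoc, div_self hc.ne', mul_one] at this
  rw [softMin]
  linarith

end SoftMin

namespace Paper

variable {Ω : Type*} [MeasurableSpace Ω]

lemma isUtility_softMin {c : ℝ} (q : ℝ) (hc : c ≠ 0) : IsUtility univ (softMin c q) :=
  ⟨fun x _ => (hasDerivAt_softMin q hc x).differentiableAt,
    fun x _ => (hasDerivAt_deriv_softMin q hc x).differentiableAt,
    fun x _ => by rw [deriv_softMin q hc]; positivity⟩

section Quantile

variable {P : Measure Ω} {X : Ω → ℝ} {C a r x : ℝ}

lemma qf_def : qf P X r = sInf {x | r ≤ P.real {ω | X ω ≤ x}} := rfl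

lemma le_of_ae_le_of_probReal_pos (ha : ∀ᵐ ω ∂P, a ≤ X ω)
    (hx : 0 < P.real {ω | X ω ≤ x}) : a ≤ x := by
  by_contra! hxa
  have : P {ω | X ω ≤ x} = 0 :=
    measure_eq_zero_iff_ae_notMem.mpr (ha.mono fun _ h hle => (hxa.trans_le h).not_ge hle)
  simp [Measure.real, this] at hx

lemma bddBelow_le_probReal (hC : ∀ᵐ ω ∂P, |X ω| ≤ C) (hr : 0 < r) :
    BddBelow {x | r ≤ P.real {ω | X ω ≤ x}} :=
  ⟨-C, fun _ hy => le_of_ae_le_of_probReal_pos (hC.mono fun _ h => neg_le_of_abs_le h)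
    (hr.trans_le hy)⟩

lemma qf_le_of_le_probReal (hC : ∀ᵐ ω ∂P, |X ω| ≤ C) (hr : 0 < r)
    (hx : r ≤ P.real {ω | X ω ≤ x}) : qf P X r ≤ x :=
  csInf_le (bddBelow_le_probReal hC hr) hx

variable [IsProbabilityMeasure P]

lemma probReal_le_eq_one (hC : ∀ᵐ ω ∂P, |X ω| ≤ C) (hx : C ≤ x) :
    P.real {ω | X ω ≤ x} = 1 := by
  have : ∀ᵐ ω ∂P, X ω ≤ x := hC.mono fun _ h => (le_abs_self _).trans (h.trans hx)
  have h : {ω | X ω ≤ x} =ᵐ[P] (univ : Set Ω) := ae_eq_univ.mpr (ae_iff.mp this)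
  rw [measureReal_def, measure_congr h]
  simp

lemma nonempty_le_probReal (hC : ∀ᵐ ω ∂P, |X ω| ≤ C) (hr1 : r ≤ 1) :
    {x | r ≤ P.real {ω | X ω ≤ x}}.Nonempty :=
  ⟨C, show r ≤ _ by rwa [probReal_le_eq_one hC le_rfl]⟩

lemma le_qf_of_ae_le (hC : ∀ᵐ ω ∂P, |X ω| ≤ C) (ha : ∀ᵐ ω ∂P, a ≤ X ω) (hr : 0 < r)
    (hr1 : r ≤ 1) : a ≤ qf P X r :=
  le_csInf (nonempty_le_probReal hC hr1) fun _ hy => le_of_ae_le_of_probReal_pos ha (hr.trans_le hy)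

lemma probReal_le_eq_cdf (hX : Measurable X) (x : ℝ) :
    P.real {ω | X ω ≤ x} = cdf (P.map X) x := by
  have := Measure.isProbabilityMeasure_map (μ := P) hX.aemeasurable
  rw [cdf_eq_real, map_measureReal_apply hX measurableSet_Iic]
  rfl

lemma le_probReal_qf (hX : Measurable X) (hC : ∀ᵐ ω ∂P, |X ω| ≤ C) (hr : 0 < r)
    (hr1 : r ≤ 1) : r ≤ P.real {ω | X ω ≤ qf P X r} := by
  rw [probReal_le_eq_cdf hX]
  refine ge_of_tendsto ((cdf (P.map X)).right_continuous _ |>.mono Ioi_subset_Ici_self) ?_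
  filter_upwards [self_mem_nhdsWithin] with x hx
  obtain ⟨y, hy, hyx⟩ := (csInf_lt_iff (bddBelow_le_probReal hC hr)
    (nonempty_le_probReal hC hr1)).mp hx
  have hy : r ≤ cdf (P.map X) y := by rwa [← probReal_le_eq_cdf hX]
  exact hy.trans ((cdf (P.map X)).mono hyx.le)

lemma qf_le_iff (hX : Measurable X) (hC : ∀ᵐ ω ∂P, |X ω| ≤ C) (hr : 0 < r) (hr1 : r ≤ 1) :
    qf P X r ≤ x ↔ r ≤ P.real {ω | X ω ≤ x} :=
  ⟨fun h => (le_probReal_qf hX hC hr hr1).trans (measureReal_mono fun _ hω => le_trans hω h),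
    qf_le_of_le_probReal hC hr⟩

lemma monotoneOn_qf (hC : ∀ᵐ ω ∂P, |X ω| ≤ C) : MonotoneOn (qf P X) (Ioc 0 1) :=
  fun _ hr _ hs hrs => csInf_le_csInf (bddBelow_le_probReal hC hr.1)
    (nonempty_le_probReal hC hs.2) fun _ hx => hrs.trans hx

lemma qf_eq_zero_of_notMem (hr : r ∉ Ioc 0 1) : qf P X r = 0 := by
  rcases le_or_gt r 0 with h0 | h1
  · have : {x | r ≤ P.real {ω | X ω ≤ x}} = univ := eq_univ_of_forall fun _ =>
      h0.trans measureReal_nonneg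
    rw [qf_def, this, Real.sInf_of_not_bddBelow not_bddBelow_univ]
  · have : {x | r ≤ P.real {ω | X ω ≤ x}} = ∅ := eq_empty_of_forall_notMem fun _ hx =>
      (lt_of_not_ge fun h => hr ⟨h1, h⟩).not_ge (hx.trans measureReal_le_one)
    rw [qf_def, this, Real.sInf_empty]

lemma abs_qf_le (hC : ∀ᵐ ω ∂P, |X ω| ≤ C) (r : ℝ) : |qf P X r| ≤ C := by
  by_cases hr : r ∈ Ioc 0 1
  · exact abs_le.mpr ⟨le_qf_of_ae_le hC (hC.mono fun _ h => neg_le_of_abs_le h) hr.1 hr.2,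
      qf_le_of_le_probReal hC hr.1 (by rw [probReal_le_eq_one hC le_rfl]; exact hr.2)⟩
  · simpa [qf_eq_zero_of_notMem hr] using nonneg_of_ae_abs_le hC

lemma preimage_qf_Iic_inter_Ioc (hX : Measurable X) (hC : ∀ᵐ ω ∂P, |X ω| ≤ C) (x : ℝ) :
    qf P X ⁻¹' Iic x ∩ Ioc 0 1 = Ioc 0 (P.real {ω | X ω ≤ x}) := by
  ext r
  simp only [mem_inter_iff, mem_preimage, mem_Iic, mem_Ioc]
  constructor
  · rintro ⟨hq, h0, h1⟩
    exact ⟨h0, (qf_le_iff hX hC h0 h1).mp hq⟩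
  · rintro ⟨h0, hx⟩
    have h1 := hx.trans measureReal_le_one
    exact ⟨(qf_le_iff hX hC h0 h1).mpr hx, h0, h1⟩

lemma measurable_qf (hX : Measurable X) (hC : ∀ᵐ ω ∂P, |X ω| ≤ C) : Measurable (qf P X) := by
  refine measurable_of_Iic fun x => ?_
  have hout : qf P X ⁻¹' Iic x \ Ioc 0 1 = (Ioc 0 1)ᶜ ∩ {_r | 0 ≤ x} := by
    ext r
    by_cases hr : r ∈ Ioc (0 : ℝ) 1 <;> simp [hr, qf_eq_zero_of_notMem]
  rw [← inter_union_sdiff (qf P X ⁻¹' Iic x) (Ioc 0 1), preimage_qf_Iic_inter_Ioc hX hC, hout]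
  exact measurableSet_Ioc.union (measurableSet_Ioc.compl.inter (.const _))

lemma map_qf (hX : Measurable X) (hC : ∀ᵐ ω ∂P, |X ω| ≤ C) :
    (volume.restrict (Ioc 0 1)).map (qf P X) = P.map X := by
  refine Measure.ext_of_Iic _ _ fun x => ?_
  rw [Measure.map_apply (measurable_qf hX hC) measurableSet_Iic,
    Measure.map_apply hX measurableSet_Iic, Measure.restrict_apply' measurableSet_Ioc,
    preimage_qf_Iic_inter_Ioc hX hC, Real.volume_Ioc, sub_zero, measureReal_def,
    ENNReal.ofReal_toReal (measure_ne_top _ _)]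
  rfl

lemma integral_comp_qf (hX : Measurable X) (hC : ∀ᵐ ω ∂P, |X ω| ≤ C) {f : ℝ → ℝ}
    (hf : Measurable f) : ∫ r in Ioc 0 1, f (qf P X r) = ∫ ω, f (X ω) ∂P := by
  rw [← integral_map (measurable_qf hX hC).aemeasurable hf.aestronglyMeasurable, map_qf hX hC,
    integral_map hX.aemeasurable hf.aestronglyMeasurable]

lemma integrableOn_qf (hX : Measurable X) (hC : ∀ᵐ ω ∂P, |X ω| ≤ C) (a b : ℝ) :
    IntegrableOn (qf P X) (Ioc a b) :=
  Measure.integrableOn_of_bounded measure_Ioc_lt_top.ne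
    (measurable_qf hX hC).aestronglyMeasurable (ae_of_all _ fun r => abs_qf_le hC r)

lemma qf_add_const (hX : Measurable X) (hC : ∀ᵐ ω ∂P, |X ω| ≤ C) (hr : 0 < r) (hr1 : r ≤ 1)
    (c : ℝ) : qf P (fun ω => X ω + c) r = qf P X r + c := by
  have hC' : ∀ᵐ ω ∂P, |X ω + c| ≤ C + |c| :=
    hC.mono fun ω h => (abs_add_le _ _).trans (by linarith)
  have hshift : ∀ y, {ω | X ω + c ≤ y} = {ω | X ω ≤ y - c} := fun y => by
    ext ω; simp [le_sub_iff_add_le]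
  refine le_antisymm (qf_le_of_le_probReal hC' hr ?_) ?_
  · rw [hshift, add_sub_cancel_right]
    exact le_probReal_qf hX hC hr hr1
  · have := le_probReal_qf (hX.add_const c) hC' hr hr1
    rw [hshift] at this
    linarith [qf_le_of_le_probReal hC hr this]

end Quantile

section ExpectedShortfall

variable {P : Measure Ω} {X : Ω → ℝ} {C m p : ℝ}

lemma ES_of_lt_one (hp : p < 1) :
    ES P p X = -(∫ r in Ioc 0 (1 - p), qf P X r) / (1 - p) := by
  rw [ES, if_pos hp, intervalIntegral.integral_of_le (by linarith)]
  ring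

lemma ES_one : ES P 1 X = rhoW P X := by
  simp [ES]

lemma ae_neg_le_rhoW (hC : ∀ᵐ ω ∂P, |X ω| ≤ C) : ∀ᵐ ω ∂P, -X ω ≤ rhoW P X :=
  ae_le_essSup <| isBoundedUnder_of_eventually_le (a := C) <|
    hC.mono fun _ h => (neg_le_abs _).trans h

variable [IsProbabilityMeasure P]

lemma rhoW_le_of_ae_le (hC : ∀ᵐ ω ∂P, |X ω| ≤ C) (hm : ∀ᵐ ω ∂P, -X ω ≤ m) : rhoW P X ≤ m := by
  refine csInf_le ⟨-C, fun m' (hm' : ∀ᵐ ω ∂P, -X ω ≤ m') => ?_⟩ hm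
  obtain ⟨ω, h, hω⟩ := (hm'.and hC).exists
  linarith [le_abs_self (X ω)]

lemma rhoW_add_const (hC : ∀ᵐ ω ∂P, |X ω| ≤ C) (c : ℝ) :
    rhoW P (fun ω => X ω + c) = rhoW P X - c := by
  have hC' : ∀ᵐ ω ∂P, |X ω + c| ≤ C + |c| :=
    hC.mono fun ω h => (abs_add_le _ _).trans (by linarith)
  refine le_antisymm (rhoW_le_of_ae_le hC' ?_) ?_
  · filter_upwards [ae_neg_le_rhoW hC] with ω h
    linarith
  · have : rhoW P X ≤ rhoW P (fun ω => X ω + c) + c := by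
      refine rhoW_le_of_ae_le hC ?_
      filter_upwards [ae_neg_le_rhoW hC'] with ω h
      linarith
    linarith

lemma neg_rhoW_le_qf (hC : ∀ᵐ ω ∂P, |X ω| ≤ C) {r : ℝ} (hr : r ∈ Ioc 0 1) :
    -rhoW P X ≤ qf P X r :=
  le_qf_of_ae_le hC ((ae_neg_le_rhoW hC).mono fun _ h => by linarith) hr.1 hr.2

lemma ES_le_rhoW (hX : Measurable X) (hC : ∀ᵐ ω ∂P, |X ω| ≤ C) (hp : p ∈ Icc 0 1) :
    ES P p X ≤ rhoW P X := by
  rcases hp.2.lt_or_eq with hp1 | rfl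
  · have ht : 0 < 1 - p := by linarith
    have := mul_le_setIntegral_Ioc ht.le (integrableOn_qf hX hC 0 (1 - p))
      fun r hr => neg_rhoW_le_qf hC ⟨hr.1, hr.2.trans (by linarith [hp.1])⟩
    rw [ES_of_lt_one hp1, div_le_iff₀ ht]
    linarith
  · exact ES_one.le

lemma abs_ES_le (hX : Measurable X) (hC : ∀ᵐ ω ∂P, |X ω| ≤ C) (hp : p ∈ Icc 0 1) :
    |ES P p X| ≤ C := by
  refine abs_le.mpr ⟨?_, (ES_le_rhoW hX hC hp).trans
    (rhoW_le_of_ae_le hC (hC.mono fun _ h => (neg_le_abs _).trans h))⟩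
  rcases hp.2.lt_or_eq with hp1 | rfl
  · have ht : 0 < 1 - p := by linarith
    have := setIntegral_Ioc_le_mul ht.le (integrableOn_qf hX hC 0 (1 - p))
      fun r _ => (le_abs_self _).trans (abs_qf_le hC r)
    rw [ES_of_lt_one hp1, le_div_iff₀ ht]
    linarith
  · rw [ES_one]
    obtain ⟨ω, h, hω⟩ := ((ae_neg_le_rhoW hC).and hC).exists
    linarith [le_abs_self (X ω)]

lemma ES_add_const (hX : Measurable X) (hC : ∀ᵐ ω ∂P, |X ω| ≤ C) (hp : p ∈ Icc 0 1) (c : ℝ) :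
    ES P p (fun ω => X ω + c) = ES P p X - c := by
  rcases hp.2.lt_or_eq with hp1 | rfl
  · have ht : 0 < 1 - p := by linarith
    have hshift : ∫ r in Ioc 0 (1 - p), qf P (fun ω => X ω + c) r
        = ∫ r in Ioc 0 (1 - p), (qf P X r + c) :=
      setIntegral_congr_fun measurableSet_Ioc fun r hr =>
        qf_add_const hX hC hr.1 (hr.2.trans (by linarith [hp.1])) c
    rw [ES_of_lt_one hp1, ES_of_lt_one hp1, hshift,
      integral_add (integrableOn_qf hX hC 0 (1 - p)) (integrableOn_const measure_Ioc_lt_top.ne),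
      setIntegral_const, Real.volume_real_Ioc_of_le ht.le, smul_eq_mul]
    field_simp
    ring
  · simp only [ES_one, rhoW_add_const hC]

lemma monotoneOn_ES (hX : Measurable X) (hC : ∀ᵐ ω ∂P, |X ω| ≤ C) :
    MonotoneOn (fun p => ES P p X) (Icc 0 1) := by
  intro p hp p' hp' hpp'
  rcases hp'.2.lt_or_eq with hp'1 | rfl
  · have := MonotoneOn.setIntegral_Ioc_div_le (monotoneOn_qf hC) (integrableOn_qf hX hC 0 1)
      (by linarith : 0 < 1 - p') (by linarith : 1 - p' ≤ 1 - p) (by linarith [hp.1])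
    simp only [ES_of_lt_one (hpp'.trans_lt hp'1), ES_of_lt_one hp'1, neg_div]
    linarith
  · exact (ES_le_rhoW hX hC hp).trans_eq ES_one.symm

end ExpectedShortfall

section StochasticDominance

variable {P : Measure Ω} [IsProbabilityMeasure P] {X Y : Ω → ℝ} {C D p t : ℝ}

lemma integrableOn_min_qf (hX : Measurable X) (hC : ∀ᵐ ω ∂P, |X ω| ≤ C) (q a b : ℝ) :
    IntegrableOn (fun r => min (qf P X r) q) (Ioc a b) :=
  (integrableOn_qf hX hC a b).inf (integrableOn_const measure_Ioc_lt_top.ne)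

lemma integral_min_eq_setIntegral_min_qf (hX : Measurable X) (hC : ∀ᵐ ω ∂P, |X ω| ≤ C)
    (q : ℝ) : ∫ ω, min (X ω) q ∂P = ∫ r in Ioc 0 1, min (qf P X r) q :=
  (integral_comp_qf hX hC (measurable_id.min measurable_const)).symm

lemma integral_min_le (hX : Measurable X) (hC : ∀ᵐ ω ∂P, |X ω| ≤ C) (ht : t ∈ Ioc 0 1)
    (q : ℝ) : ∫ ω, min (X ω) q ∂P ≤ (∫ r in Ioc 0 t, qf P X r) + (1 - t) * q := by
  rw [integral_min_eq_setIntegral_min_qf hX hC,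
    ← setIntegral_Ioc_add_setIntegral_Ioc ht.1.le ht.2 (integrableOn_min_qf hX hC q 0 1)]
  exact add_le_add
    (setIntegral_mono_on (integrableOn_min_qf hX hC q 0 t) (integrableOn_qf hX hC 0 t)
      measurableSet_Ioc fun r _ => min_le_left _ _)
    (setIntegral_Ioc_le_mul ht.2 (integrableOn_min_qf hX hC q t 1) fun r _ => min_le_right _ _)

lemma integral_min_qf_eq (hX : Measurable X) (hC : ∀ᵐ ω ∂P, |X ω| ≤ C) (ht : t ∈ Ioc 0 1) :
    ∫ ω, min (X ω) (qf P X t) ∂P = (∫ r in Ioc 0 t, qf P X r) + (1 - t) * qf P X t := by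
  rw [integral_min_eq_setIntegral_min_qf hX hC,
    ← setIntegral_Ioc_add_setIntegral_Ioc ht.1.le ht.2 (integrableOn_min_qf hX hC _ 0 1),
    setIntegral_congr_fun measurableSet_Ioc fun r hr =>
      min_eq_left (monotoneOn_qf hC ⟨hr.1, hr.2.trans ht.2⟩ ht hr.2),
    setIntegral_congr_fun measurableSet_Ioc fun r hr =>
      min_eq_right (monotoneOn_qf hC ht ⟨ht.1.trans hr.1, hr.2⟩ hr.1.le),
    setIntegral_const, Real.volume_real_Ioc_of_le ht.2, smul_eq_mul]

lemma setIntegral_qf_le_of_integral_min_le (hX : Measurable X) (hC : ∀ᵐ ω ∂P, |X ω| ≤ C)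
    (hY : Measurable Y) (hD : ∀ᵐ ω ∂P, |Y ω| ≤ D)
    (hmin : ∀ q, ∫ ω, min (X ω) q ∂P ≤ ∫ ω, min (Y ω) q ∂P) (ht : t ∈ Ioc 0 1) :
    ∫ r in Ioc 0 t, qf P X r ≤ ∫ r in Ioc 0 t, qf P Y r := by
  linarith [integral_min_qf_eq hX hC ht, hmin (qf P X t), integral_min_le hY hD ht (qf P X t)]

lemma rhoW_le_of_integral_min_le (hC : ∀ᵐ ω ∂P, |X ω| ≤ C) (hY : Measurable Y)
    (hD : ∀ᵐ ω ∂P, |Y ω| ≤ D)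
    (hmin : ∀ q, ∫ ω, min (X ω) q ∂P ≤ ∫ ω, min (Y ω) q ∂P) : rhoW P Y ≤ rhoW P X := by
  -- `E[min(X, -m)] = -m` for `m = ρ^w(X)`, so `E[min(Y, -m)] ≥ -m` forces `Y ≥ -m` a.s.
  set m := rhoW P X
  have hXm : ∫ ω, min (X ω) (-m) ∂P = -m := by
    rw [integral_congr_ae ((ae_neg_le_rhoW hC).mono fun ω h => min_eq_right (by linarith)),
      integral_const, probReal_univ, one_smul]
  have hint : Integrable (fun ω => min (Y ω) (-m)) P :=
    (Integrable.of_bound hY.aestronglyMeasurable D hD).inf (integrable_const _)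
  have hgap : (fun ω => -m - min (Y ω) (-m)) =ᵐ[P] 0 := by
    refine (integral_eq_zero_iff_of_nonneg (fun ω => sub_nonneg.mpr (min_le_right _ _))
      ((integrable_const _).sub hint)).mp (le_antisymm ?_ ?_)
    · rw [integral_sub (integrable_const _) hint, integral_const, probReal_univ, one_smul]
      linarith [hmin (-m)]
    · exact integral_nonneg fun ω => sub_nonneg.mpr (min_le_right _ _)
  refine rhoW_le_of_ae_le hD (hgap.mono fun ω h => ?_)
  have := min_le_left (Y ω) (-m)
  simp only [Pi.zero_apply] at h
  linarith

lemma ES_le_ES_of_integral_min_le (hX : Measurable X) (hC : ∀ᵐ ω ∂P, |X ω| ≤ C)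
    (hY : Measurable Y) (hD : ∀ᵐ ω ∂P, |Y ω| ≤ D)
    (hmin : ∀ q, ∫ ω, min (X ω) q ∂P ≤ ∫ ω, min (Y ω) q ∂P) (hp : p ∈ Icc 0 1) :
    ES P p Y ≤ ES P p X := by
  rcases hp.2.lt_or_eq with hp1 | rfl
  · rw [ES_of_lt_one hp1, ES_of_lt_one hp1]
    have := setIntegral_qf_le_of_integral_min_le hX hC hY hD hmin
      (t := 1 - p) ⟨by linarith, by linarith [hp.1]⟩
    gcongr
  · simpa only [ES_one] using rhoW_le_of_integral_min_le hC hY hD hmin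

lemma integral_min_le_of_SSD (hX : Measurable X) (hC : ∀ᵐ ω ∂P, |X ω| ≤ C)
    (hY : Measurable Y) (hD : ∀ᵐ ω ∂P, |Y ω| ≤ D) (hssd : SSD P X Y) (q : ℝ) :
    ∫ ω, min (X ω) q ∂P ≤ ∫ ω, min (Y ω) q ∂P := by
  refine le_of_forall_pos_le_add fun ε hε => ?_
  set c := Real.log 2 / ε
  have hc : 0 < c := div_pos (Real.log_pos one_lt_two) hε
  have hgap : Real.log 2 / c = ε := by simp only [c]; field_simp
  have hint : ∀ {Z : Ω → ℝ} {B : ℝ}, Measurable Z → (∀ᵐ ω ∂P, |Z ω| ≤ B) →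
      Integrable (fun ω => softMin c q (Z ω)) P := fun hZ hB =>
    Monotone.integrable_comp (monotone_softMin q hc.ne') (continuous_softMin q hc.ne') hZ hB
  calc ∫ ω, min (X ω) q ∂P ≤ ∫ ω, (softMin c q (X ω) + ε) ∂P :=
        integral_mono ((Integrable.of_bound hX.aestronglyMeasurable C hC).inf (integrable_const q))
          ((hint hX hC).add (integrable_const ε))
          fun ω => by linarith [min_sub_le_softMin q hc (X ω)]
    _ = ∫ ω, softMin c q (X ω) ∂P + ε := by
        rw [integral_add (hint hX hC) (integrable_const ε), integral_const, probReal_univ, one_smul]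
    _ ≤ ∫ ω, softMin c q (Y ω) ∂P + ε := add_le_add
        (hssd _ (isUtility_softMin q hc.ne') (concaveOn_softMin q hc) (hint hX hC) (hint hY hD))
        le_rfl
    _ ≤ ∫ ω, min (Y ω) q ∂P + ε := add_le_add (integral_mono (hint hY hD)
          ((Integrable.of_bound hY.aestronglyMeasurable D hD).inf (integrable_const q))
          fun ω => softMin_le_min q hc (Y ω)) le_rfl

lemma ES_le_ES_of_SSD (hX : Measurable X) (hC : ∀ᵐ ω ∂P, |X ω| ≤ C)
    (hY : Measurable Y) (hD : ∀ᵐ ω ∂P, |Y ω| ≤ D) (hssd : SSD P X Y) (hp : p ∈ Icc 0 1) :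
    ES P p Y ≤ ES P p X :=
  ES_le_ES_of_integral_min_le hX hC hY hD (integral_min_le_of_SSD hX hC hY hD hssd) hp

lemma SSD_of_setIntegral_qf_le (hX : Measurable X) (hC : ∀ᵐ ω ∂P, |X ω| ≤ C)
    (hY : Measurable Y) (hD : ∀ᵐ ω ∂P, |Y ω| ≤ D)
    (hH : ∀ t ∈ Ioc (0 : ℝ) 1, ∫ r in Ioc 0 t, qf P Y r ≤ ∫ r in Ioc 0 t, qf P X r) :
    SSD P Y X := by
  rintro u ⟨hdiff, -, hpos⟩ (hconc : ConcaveOn ℝ univ u) - -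
  have hdiff : Differentiable ℝ u := fun x => hdiff x trivial
  rw [← integral_comp_qf hY hD hdiff.continuous.measurable,
    ← integral_comp_qf hX hC hdiff.continuous.measurable]
  exact hconc.setIntegral_comp_le_of_setIntegral_Ioc_le hdiff (fun x => (hpos x trivial).le)
    (measurable_qf hY hD) (measurable_qf hX hC) (fun r => (abs_qf_le hD r).trans (le_max_right C D))
    (fun r => (abs_qf_le hC r).trans (le_max_left C D)) (monotoneOn_qf hC) hH

lemma SSD_of_ES_le_ES (hX : Measurable X) (hC : ∀ᵐ ω ∂P, |X ω| ≤ C)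
    (hY : Measurable Y) (hD : ∀ᵐ ω ∂P, |Y ω| ≤ D)
    (hES : ∀ p ∈ Icc (0 : ℝ) 1, ES P p X ≤ ES P p Y) : SSD P Y X := by
  refine SSD_of_setIntegral_qf_le hX hC hY hD fun t ht => ?_
  have h := hES (1 - t) ⟨by linarith [ht.2], by linarith [ht.1]⟩
  rw [ES_of_lt_one (by linarith [ht.1]), ES_of_lt_one (by linarith [ht.1]), sub_sub_cancel,
    div_le_div_iff_of_pos_right ht.1, neg_le_neg_iff] at h
  exact h

end StochasticDominance

section Representation

variable {P : Measure Ω} [IsProbabilityMeasure P] {ρ : (Ω → ℝ) → ℝ} {X Y Z : Ω → ℝ}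
  {g : ℝ → ℝ}

lemma monotoneOn_ES_sub_const (hX : MemX P X) (c : ℝ) :
    MonotoneOn (fun p => ES P p X - c) (Icc 0 1) := fun _ ha _ hb hab =>
  sub_le_sub_right (monotoneOn_ES hX.1 hX.2.choose_spec ha hb hab) c

lemma bddAbove_range_ES_sub (hX : MemX P X) (hg : MonotoneOn g (Icc 0 1)) :
    BddAbove (range fun p : Icc (0 : ℝ) 1 => ES P p X - g p) := by
  obtain ⟨hXm, C, hC⟩ := hX
  refine ⟨C - g 0, ?_⟩
  rintro _ ⟨p, rfl⟩
  linarith [le_of_abs_le (abs_ES_le hXm hC p.2), hg ⟨le_rfl, zero_le_one⟩ p.2 p.2.1]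

lemma iSup_ES_sub_le_iSup_ES_sub_add (hZ : MemX P Z) (hg : MonotoneOn g (Icc 0 1))
    {K : ℝ} (hK : ∀ p ∈ Icc (0 : ℝ) 1, ES P p X ≤ ES P p Z + K) :
    ⨆ p : Icc (0 : ℝ) 1, (ES P p X - g p) ≤ (⨆ p : Icc (0 : ℝ) 1, (ES P p Z - g p)) + K :=
  ciSup_le fun p => by linarith [hK p p.2, le_ciSup (bddAbove_range_ES_sub hZ hg) p]

lemma le_iSup_ES_sub_of_SSD_consistent (hρ : IsRiskMeasure P ρ)
    (hcons : ∀ X Y : Ω → ℝ, MemX P X → MemX P Y → SSD P X Y → ρ Y ≤ ρ X)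
    (hX : MemX P X) (hZ : MemX P Z) :
    ρ X ≤ ⨆ p : Icc (0 : ℝ) 1, (ES P p X - (ES P p Z - ρ Z)) := by
  set m := ⨆ p : Icc (0 : ℝ) 1, (ES P p X - (ES P p Z - ρ Z))
  obtain ⟨hXm, C, hC⟩ := hX
  obtain ⟨hZm, D, hD⟩ := hZ
  have hD' : ∀ᵐ ω ∂P, |Z ω + (ρ Z - m)| ≤ D + |ρ Z - m| :=
    hD.mono fun ω h => (abs_add_le _ _).trans (by linarith)
  have hle : ∀ p ∈ Icc (0 : ℝ) 1, ES P p X ≤ ES P p (fun ω => Z ω + (ρ Z - m)) := fun p hp => by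
    have : ES P p X - (ES P p Z - ρ Z) ≤ m := le_ciSup (f := fun p : Icc (0 : ℝ) 1 =>
      ES P p X - (ES P p Z - ρ Z)) (bddAbove_range_ES_sub ⟨hXm, C, hC⟩
        (monotoneOn_ES_sub_const ⟨hZm, D, hD⟩ (ρ Z))) ⟨p, hp⟩
    rw [ES_add_const hZm hD hp]
    linarith
  have := hcons _ X ⟨hZm.add_const _, _, hD'⟩ ⟨hXm, C, hC⟩
    (SSD_of_ES_le_ES hXm hC (hZm.add_const _) hD' hle)
  rw [hρ.2 Z ⟨hZm, D, hD⟩] at this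
  linarith

lemma eq_iInf_iSup_ES_sub_of_SSD_consistent (hρ : IsRiskMeasure P ρ)
    (hcons : ∀ X Y : Ω → ℝ, MemX P X → MemX P Y → SSD P X Y → ρ Y ≤ ρ X) (hX : MemX P X) :
    ρ X = ⨅ g : {g | ∃ Z, MemX P Z ∧ g = fun p => ES P p Z - ρ Z},
      ⨆ p : Icc (0 : ℝ) 1, (ES P p X - (g : ℝ → ℝ) p) := by
  have : Nonempty {g | ∃ Z, MemX P Z ∧ g = fun p => ES P p Z - ρ Z} := ⟨⟨_, X, hX, rfl⟩⟩
  have hbelow : ∀ g : {g | ∃ Z, MemX P Z ∧ g = fun p => ES P p Z - ρ Z},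
      ρ X ≤ ⨆ p : Icc (0 : ℝ) 1, (ES P p X - (g : ℝ → ℝ) p) := by
    rintro ⟨_, Z, hZ, rfl⟩
    exact le_iSup_ES_sub_of_SSD_consistent hρ hcons hX hZ
  refine le_antisymm (le_ciInf hbelow)
    ((ciInf_le ⟨ρ X, forall_mem_range.2 hbelow⟩ ⟨_, X, hX, rfl⟩).trans_eq ?_)
  simp

lemma iInf_iSup_ES_sub_le_of_SSD {𝒢 : Set (ℝ → ℝ)} [Nonempty 𝒢]
    (hmono : ∀ g ∈ 𝒢, MonotoneOn g (Icc 0 1)) (hX : MemX P X) (hY : MemX P Y)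
    (hssd : SSD P X Y) :
    ⨅ g : 𝒢, ⨆ p : Icc (0 : ℝ) 1, (ES P p Y - (g : ℝ → ℝ) p)
      ≤ ⨅ g : 𝒢, ⨆ p : Icc (0 : ℝ) 1, (ES P p X - (g : ℝ → ℝ) p) := by
  obtain ⟨hXm, C, hC⟩ := id hX
  obtain ⟨hYm, D, hD⟩ := id hY
  refine Real.iInf_le_iInf_of_le_of_le_add (K := C + D)
    (fun g => ciSup_mono (bddAbove_range_ES_sub hX (hmono g g.2)) fun p => ?_)
    fun g => iSup_ES_sub_le_iSup_ES_sub_add hY (hmono g g.2) fun p hp => ?_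
  · exact sub_le_sub_right (ES_le_ES_of_SSD hXm hC hYm hD hssd p.2) _
  · linarith [le_of_abs_le (abs_ES_le hXm hC hp), neg_le_of_abs_le (abs_ES_le hYm hD hp)]

end Representation

theorem statement6_general (P : Measure Ω) [IsProbabilityMeasure P]
    (ρ : (Ω → ℝ) → ℝ) (hρ : IsRiskMeasure P ρ) :
    (∀ X Y : Ω → ℝ, MemX P X → MemX P Y → SSD P X Y → ρ Y ≤ ρ X) ↔
      ∃ 𝒢 : Set (ℝ → ℝ), 𝒢.Nonempty ∧
        (∀ g ∈ 𝒢, MonotoneOn g (Set.Icc 0 1)) ∧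
        (∀ X : Ω → ℝ, MemX P X →
          ρ X = ⨅ g : 𝒢, ⨆ p : Set.Icc (0:ℝ) 1, (ES P p.1 X - (g : ℝ → ℝ) p.1)) := by
  constructor
  · intro hcons
    refine ⟨{g | ∃ Z, MemX P Z ∧ g = fun p => ES P p Z - ρ Z},
      ⟨_, 0, ⟨measurable_const, 0, by simp⟩, rfl⟩, ?_,
      fun X hX => eq_iInf_iSup_ES_sub_of_SSD_consistent hρ hcons hX⟩
    rintro _ ⟨Z, hZ, rfl⟩
    exact monotoneOn_ES_sub_const hZ (ρ Z)
  · rintro ⟨𝒢, ⟨g₀, hg₀⟩, hmono, hrep⟩ X Y hX hY hssd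
    have : Nonempty 𝒢 := ⟨⟨g₀, hg₀⟩⟩
    rw [hrep X hX, hrep Y hY]
    exact iInf_iSup_ES_sub_le_of_SSD hmono hX hY hssd

/-- A monetary risk measure `ρ` is SSD-consistent iff it admits
the representation `ρ(X) = inf_{g ∈ 𝒢} sup_{p ∈ [0,1]} (ES_p(X) - g(p))` for a
family `𝒢` of nondecreasing functions `g : [0,1] → ℝ`. -/
theorem statement6 (P : Measure Ω) [IsProbabilityMeasure P] (hP : Atomless P)
    (ρ : (Ω → ℝ) → ℝ) (hρ : IsRiskMeasure P ρ) :
    (∀ X Y : Ω → ℝ, MemX P X → MemX P Y → SSD P X Y → ρ Y ≤ ρ X) ↔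
      ∃ 𝒢 : Set (ℝ → ℝ), 𝒢.Nonempty ∧
        (∀ g ∈ 𝒢, MonotoneOn g (Set.Icc 0 1)) ∧
        (∀ X : Ω → ℝ, MemX P X →
          ρ X = ⨅ g : 𝒢, ⨆ p : Set.Icc (0:ℝ) 1, (ES P p.1 X - (g : ℝ → ℝ) p.1)) :=
  statement6_general P ρ hρ

end Paper
end
end

section
/- Let c > 0. A monetary risk measure ρ: 𝒳 → ℝ is 𝔢_c-SD-consistent if and only if there exists a family 𝒢 of nondecreasing functions g: [0,1] → (−∞,0) such that for all X ∈ 𝒳, ρ(X) = inf_{g∈𝒢} sup_{p∈[0,1]} (1/c)·log( g(p) / ES_p(e^{cX}) ). -/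
open MeasureTheory Filter Set

noncomputable section

namespace Paper

variable {Ω : Type*} [MeasurableSpace Ω]

/-!
A utility `u` is at least as risk averse as `𝔢_c` exactly when `u = φ ∘ 𝔢_c` with `φ` increasing
and concave, so `X ≤_{𝔢_c-SD} Y` is second-order stochastic dominance of `e^{cX}` by `e^{cY}`.
For bounded variables this is equivalent to `ES_p(e^{cY}) ≤ ES_p(e^{cX})` for all `p`: one
direction tests against smooth approximations of `z ↦ min z k`, the other compares integrated
quantile functions through a tangent-line bound and Abel's inequality.

Given consistency, take `𝒢 = {p ↦ e^{cρ(Y)} ES_p(e^{cY}) : Y ∈ 𝒳}`. The function coming from `X`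
itself gives the value `ρ(X)`, and shifting `X` by the right amount of cash makes it dominate any
`Y`, which bounds `ρ(X)` by the term of `Y`. Conversely each term is monotone for the ES-order,
and so is the infimum over `𝒢`.
-/

open ProbabilityTheory

theorem _root_.StieltjesFunction.csInf_le_iff (F : StieltjesFunction ℝ) {r x : ℝ}
    (hne : {y | r ≤ F y}.Nonempty) (hbdd : BddBelow {y | r ≤ F y}) :
    sInf {y | r ≤ F y} ≤ x ↔ r ≤ F x := by
  refine ⟨fun hx => ?_, fun hx => csInf_le hbdd hx⟩
  set s := sInf {y | r ≤ F y}
  have hs : r ≤ F s := by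
    refine ge_of_tendsto ((F.right_continuous s).mono Ioi_subset_Ici_self)
      (eventually_nhdsWithin_of_forall fun y (hy : s < y) => ?_)
    obtain ⟨z, hz, hzy⟩ := exists_lt_of_csInf_lt hne hy
    exact hz.trans (F.mono hzy.le)
  exact hs.trans (F.mono hx)

section Quantile

variable {P : Measure Ω} {Z : Ω → ℝ} {a b : ℝ}

structure PosBounded (P : Measure Ω) (Z : Ω → ℝ) (a b : ℝ) : Prop where
  measurable : Measurable Z
  pos : 0 < a
  ae_mem_Icc : ∀ᵐ ω ∂P, Z ω ∈ Icc a b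

/-- Off `(0, 1]`, `qf` takes the junk value `0` (an infimum over `univ` or `∅`); clamping `r`
and taking the maximum with `a` makes it monotone on `ℝ` without changing it on `(0, 1]`. -/
def qfExt (P : Measure Ω) (Z : Ω → ℝ) (a r : ℝ) : ℝ := max a (qf P Z (min r 1))

theorem PosBounded.qfExt_of_nonpos (hB : PosBounded P Z a b) {r : ℝ} (hr : r ≤ 0) :
    qfExt P Z a r = a := by
  have hq : qf P Z (min r 1) = 0 := by
    have : {x | min r 1 ≤ (P {ω | Z ω ≤ x}).toReal} = univ :=
      eq_univ_of_forall fun x => (min_le_left r 1).trans (hr.trans ENNReal.toReal_nonneg)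
    rw [qf, this]
    exact Real.sInf_of_not_bddBelow not_bddBelow_univ
  rw [qfExt, hq, max_eq_left hB.pos.le]

theorem PosBounded.const_mul (hB : PosBounded P Z a b) {s : ℝ} (hs : 0 < s) :
    PosBounded P (fun ω => s * Z ω) (s * a) (s * b) :=
  ⟨hB.measurable.const_mul s, mul_pos hs hB.pos, hB.ae_mem_Icc.mono fun _ hω =>
    ⟨mul_le_mul_of_nonneg_left hω.1 hs.le, mul_le_mul_of_nonneg_left hω.2 hs.le⟩⟩

variable [IsProbabilityMeasure P]

theorem PosBounded.le (hB : PosBounded P Z a b) : a ≤ b := by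
  obtain ⟨ω, hω⟩ := hB.ae_mem_Icc.exists
  exact hω.1.trans hω.2

theorem toReal_measure_le_eq_cdf (hZ : Measurable Z) (x : ℝ) :
    (P {ω | Z ω ≤ x}).toReal = cdf (P.map Z) x := by
  have := Measure.isProbabilityMeasure_map (μ := P) hZ.aemeasurable
  rw [cdf_eq_real, measureReal_def, Measure.map_apply hZ measurableSet_Iic]
  rfl

theorem qf_eq_sInf_cdf (hZ : Measurable Z) (r : ℝ) :
    qf P Z r = sInf {x | r ≤ cdf (P.map Z) x} := by
  simp only [qf, toReal_measure_le_eq_cdf hZ]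

theorem cdf_map_eq_zero (hZ : Measurable Z) {x₀ x : ℝ} (h : ∀ᵐ ω ∂P, x₀ ≤ Z ω)
    (hx : x < x₀) : cdf (P.map Z) x = 0 := by
  have h0 : P {ω | Z ω ≤ x} = 0 := measure_eq_zero_iff_ae_notMem.mpr
    (h.mono fun ω hω (hle : Z ω ≤ x) => (hle.trans_lt hx).not_ge hω)
  rw [← toReal_measure_le_eq_cdf hZ, h0, ENNReal.toReal_zero]

theorem cdf_map_eq_one (hZ : Measurable Z) {x₀ x : ℝ} (h : ∀ᵐ ω ∂P, Z ω ≤ x₀)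
    (hx : x₀ ≤ x) : cdf (P.map Z) x = 1 := by
  rw [← toReal_measure_le_eq_cdf hZ, measure_congr (eventuallyEq_univ.mpr
    (h.mono fun ω hω => hω.trans hx)), measure_univ, ENNReal.toReal_one]

namespace PosBounded

theorem qf_le_iff (hB : PosBounded P Z a b) {r x : ℝ} (hr : r ∈ Ioc (0:ℝ) 1) :
    qf P Z r ≤ x ↔ r ≤ cdf (P.map Z) x := by
  rw [qf_eq_sInf_cdf hB.measurable]
  refine StieltjesFunction.csInf_le_iff _ ⟨b, ?_⟩ ⟨a, fun y hy => ?_⟩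
  · rw [mem_ofPred_eq, cdf_map_eq_one hB.measurable (hB.ae_mem_Icc.mono fun _ h => h.2) le_rfl]
    exact hr.2
  · by_contra! hya
    rw [mem_ofPred_eq, cdf_map_eq_zero hB.measurable (hB.ae_mem_Icc.mono fun _ h => h.1) hya]
      at hy
    exact hr.1.not_ge hy

theorem le_qf (hB : PosBounded P Z a b) {x₀ r : ℝ} (h : ∀ᵐ ω ∂P, x₀ ≤ Z ω)
    (hr : r ∈ Ioc (0:ℝ) 1) : x₀ ≤ qf P Z r := by
  by_contra! hlt
  have := (hB.qf_le_iff hr).mp le_rfl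
  rw [cdf_map_eq_zero hB.measurable h hlt] at this
  exact hr.1.not_ge this

theorem qf_mem_Icc (hB : PosBounded P Z a b) {r : ℝ} (hr : r ∈ Ioc (0:ℝ) 1) :
    qf P Z r ∈ Icc a b :=
  ⟨hB.le_qf (hB.ae_mem_Icc.mono fun _ h => h.1) hr, (hB.qf_le_iff hr).mpr <| by
    rw [cdf_map_eq_one hB.measurable (hB.ae_mem_Icc.mono fun _ h => h.2) le_rfl]
    exact hr.2⟩

theorem monotoneOn_qf (hB : PosBounded P Z a b) : MonotoneOn (qf P Z) (Ioc 0 1) :=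
  fun _ hr _ hr' hrr' => (hB.qf_le_iff hr).mpr (hrr'.trans ((hB.qf_le_iff hr').mp le_rfl))

theorem qfExt_eq (hB : PosBounded P Z a b) {r : ℝ} (hr : r ∈ Ioc (0:ℝ) 1) :
    qfExt P Z a r = qf P Z r := by
  rw [qfExt, min_eq_left hr.2, max_eq_right (hB.qf_mem_Icc hr).1]

theorem qfExt_mem_Icc (hB : PosBounded P Z a b) (r : ℝ) : qfExt P Z a r ∈ Icc a b := by
  rcases le_or_gt r 0 with hr | hr
  · rw [hB.qfExt_of_nonpos hr]
    exact ⟨le_rfl, hB.le⟩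
  · have hr' : min r 1 ∈ Ioc (0:ℝ) 1 := ⟨lt_min hr one_pos, min_le_right _ _⟩
    exact ⟨le_max_left _ _, max_le hB.le (hB.qf_mem_Icc hr').2⟩

theorem monotone_qfExt (hB : PosBounded P Z a b) : Monotone (qfExt P Z a) := by
  intro r r' hrr'
  rcases le_or_gt r 0 with hr | hr
  · rw [hB.qfExt_of_nonpos hr]
    exact (hB.qfExt_mem_Icc r').1
  · exact max_le_max le_rfl <| hB.monotoneOn_qf ⟨lt_min hr one_pos, min_le_right _ _⟩
      ⟨lt_min (hr.trans_le hrr') one_pos, min_le_right _ _⟩ (min_le_min_right 1 hrr')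

theorem measurable_qfExt (hB : PosBounded P Z a b) : Measurable (qfExt P Z a) :=
  hB.monotone_qfExt.measurable

theorem map_qfExt (hB : PosBounded P Z a b) :
    (volume.restrict (Ioc (0:ℝ) 1)).map (qfExt P Z a) = P.map Z := by
  refine Measure.ext_of_Iic _ _ fun x => ?_
  have hset : qfExt P Z a ⁻¹' Iic x ∩ Ioc 0 1 = Ioc 0 (cdf (P.map Z) x) := by
    ext r
    simp only [mem_inter_iff, mem_preimage, mem_Iic, mem_Ioc]
    constructor
    · rintro ⟨hq, hr0, hr1⟩
      rw [hB.qfExt_eq ⟨hr0, hr1⟩] at hq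
      exact ⟨hr0, (hB.qf_le_iff ⟨hr0, hr1⟩).mp hq⟩
    · rintro ⟨hr0, hrx⟩
      have hr1 : r ≤ 1 := hrx.trans (cdf_le_one _ _)
      rw [hB.qfExt_eq ⟨hr0, hr1⟩]
      exact ⟨(hB.qf_le_iff ⟨hr0, hr1⟩).mpr hrx, hr0, hr1⟩
  have := Measure.isProbabilityMeasure_map (μ := P) hB.measurable.aemeasurable
  rw [Measure.map_apply hB.measurable_qfExt measurableSet_Iic,
    Measure.restrict_apply (hB.measurable_qfExt measurableSet_Iic), hset, Real.volume_Ioc,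
    sub_zero, ← ofReal_cdf]

theorem integral_comp_eq (hB : PosBounded P Z a b) {g : ℝ → ℝ} (hg : Continuous g) :
    ∫ ω, g (Z ω) ∂P = ∫ r in (0:ℝ)..1, g (qfExt P Z a r) := by
  rw [intervalIntegral.integral_of_le zero_le_one,
    ← integral_map hB.measurable.aemeasurable hg.aestronglyMeasurable, ← hB.map_qfExt,
    integral_map hB.measurable_qfExt.aemeasurable hg.aestronglyMeasurable]

theorem integrable_comp (hB : PosBounded P Z a b) {g : ℝ → ℝ} (hg : Continuous g) :
    Integrable (fun ω => g (Z ω)) P := by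
  obtain ⟨M, hM⟩ := isCompact_Icc.exists_bound_of_continuousOn (hg.continuousOn (s := Icc a b))
  exact (integrable_const M).mono' (hg.measurable.comp hB.measurable).aestronglyMeasurable
    (hB.ae_mem_Icc.mono fun ω hω => hM _ hω)

theorem intervalIntegrable_comp_qfExt (hB : PosBounded P Z a b) {g : ℝ → ℝ}
    (hg : Continuous g) (s t : ℝ) :
    IntervalIntegrable (fun r => g (qfExt P Z a r)) volume s t := by
  obtain ⟨M, hM⟩ := isCompact_Icc.exists_bound_of_continuousOn (hg.continuousOn (s := Icc a b))
  exact (intervalIntegrable_const (c := M)).mono_fun'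
    (hg.measurable.comp hB.measurable_qfExt).aestronglyMeasurable
    (Eventually.of_forall fun r => hM _ (hB.qfExt_mem_Icc r))

end PosBounded

end Quantile

section IntQuantile

variable {P : Measure Ω} [IsProbabilityMeasure P] {Z W : Ω → ℝ} {a b b' : ℝ}

def intQuantile (P : Measure Ω) (Z : Ω → ℝ) (a t : ℝ) : ℝ :=
  ∫ r in (0:ℝ)..t, qfExt P Z a r

namespace PosBounded

theorem intervalIntegrable_qfExt (hB : PosBounded P Z a b) (s t : ℝ) :
    IntervalIntegrable (qfExt P Z a) volume s t :=
  hB.monotone_qfExt.intervalIntegrable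

theorem integral_min_le (hB : PosBounded P Z a b) {t : ℝ} (ht : t ∈ Icc (0:ℝ) 1) (k : ℝ) :
    ∫ ω, min (Z ω) k ∂P ≤ intQuantile P Z a t + k * (1 - t) := by
  have hg : Continuous fun z : ℝ => min z k := continuous_id.min continuous_const
  have hmin := hB.intervalIntegrable_comp_qfExt hg
  rw [hB.integral_comp_eq hg,
    ← intervalIntegral.integral_add_adjacent_intervals (hmin 0 t) (hmin t 1)]
  gcongr ?_ + ?_
  · exact intervalIntegral.integral_mono_on ht.1 (hmin 0 t) (hB.intervalIntegrable_qfExt 0 t)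
      fun r _ => min_le_left _ _
  · calc _ ≤ ∫ _ in t..1, k :=
          intervalIntegral.integral_mono_on ht.2 (hmin t 1) intervalIntegrable_const
            fun r _ => min_le_right _ _
      _ = k * (1 - t) := by simp [mul_comm]

theorem integral_min_qfExt (hB : PosBounded P Z a b) {t : ℝ} (ht : t ∈ Icc (0:ℝ) 1) :
    ∫ ω, min (Z ω) (qfExt P Z a t) ∂P = intQuantile P Z a t + qfExt P Z a t * (1 - t) := by
  set q := qfExt P Z a t
  have hg : Continuous fun z : ℝ => min z q := continuous_id.min continuous_const
  have hmin := hB.intervalIntegrable_comp_qfExt hg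
  rw [hB.integral_comp_eq hg,
    ← intervalIntegral.integral_add_adjacent_intervals (hmin 0 t) (hmin t 1),
    intervalIntegral.integral_congr (g := qfExt P Z a) fun r hr =>
      min_eq_left (hB.monotone_qfExt (uIcc_of_le ht.1 ▸ hr).2),
    intervalIntegral.integral_congr (g := fun _ => q) fun r hr =>
      min_eq_right (hB.monotone_qfExt (uIcc_of_le ht.2 ▸ hr).1)]
  simp [intQuantile, mul_comm]

theorem intQuantile_le_of_integral_min_le (hBZ : PosBounded P Z a b) (hBW : PosBounded P W a b')
    (h : ∀ k, ∫ ω, min (Z ω) k ∂P ≤ ∫ ω, min (W ω) k ∂P) {t : ℝ}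
    (ht : t ∈ Icc (0:ℝ) 1) :
    intQuantile P Z a t ≤ intQuantile P W a t := by
  have := (hBZ.integral_min_qfExt ht).symm.trans_le ((h _).trans (hBW.integral_min_le ht _))
  linarith

end PosBounded

end IntQuantile

section ExpectedShortfall

variable {P : Measure Ω} {Z W : Ω → ℝ} {a b a' b' : ℝ}

theorem PosBounded.rhoW_set_nonempty (hB : PosBounded P Z a b) :
    {m : ℝ | ∀ᵐ ω ∂P, -Z ω ≤ m}.Nonempty :=
  ⟨-a, hB.ae_mem_Icc.mono fun _ hω => neg_le_neg hω.1⟩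

variable [IsProbabilityMeasure P]

namespace PosBounded

theorem bddBelow_rhoW_set (hB : PosBounded P Z a b) :
    BddBelow {m : ℝ | ∀ᵐ ω ∂P, -Z ω ≤ m} := by
  refine ⟨-b, fun m (hm : ∀ᵐ ω ∂P, -Z ω ≤ m) => ?_⟩
  obtain ⟨ω, hωm, hω⟩ := (hm.and hB.ae_mem_Icc).exists
  linarith [hω.2]

theorem rhoW_mem_Icc (hB : PosBounded P Z a b) : rhoW P Z ∈ Icc (-b) (-a) :=
  ⟨le_csInf hB.rhoW_set_nonempty fun m (hm : ∀ᵐ ω ∂P, -Z ω ≤ m) => by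
      obtain ⟨ω, hωm, hω⟩ := (hm.and hB.ae_mem_Icc).exists
      linarith [hω.2],
    csInf_le hB.bddBelow_rhoW_set (hB.ae_mem_Icc.mono fun _ hω => neg_le_neg hω.1)⟩

theorem rhoW_le_of_integral_min_le (hBZ : PosBounded P Z a b) (hBW : PosBounded P W a' b')
    (h : ∀ k, ∫ ω, min (Z ω) k ∂P ≤ ∫ ω, min (W ω) k ∂P) :
    rhoW P W ≤ rhoW P Z := by
  refine csInf_le_csInf hBW.bddBelow_rhoW_set hBZ.rhoW_set_nonempty
    fun m (hm : ∀ᵐ ω ∂P, -Z ω ≤ m) => ?_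
  have hZ : ∫ ω, min (Z ω) (-m) ∂P = -m := by
    rw [integral_congr_ae (hm.mono fun ω hω => min_eq_right (neg_le.mp hω)), integral_const,
      probReal_univ, one_smul]
  -- `min W (-m) ≤ -m` with equal expectations forces `W ≥ -m` a.s.
  have hmin : Continuous fun z : ℝ => min z (-m) := continuous_id.min continuous_const
  have hg : Continuous fun z : ℝ => -m - min z (-m) := continuous_const.sub hmin
  have hnn : 0 ≤ fun ω => -m - min (W ω) (-m) := fun ω => sub_nonneg.mpr (min_le_right _ _)
  have hzero : ∫ ω, (-m - min (W ω) (-m)) ∂P = 0 := by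
    refine le_antisymm ?_ (integral_nonneg hnn)
    rw [integral_sub (integrable_const _) (hBW.integrable_comp hmin),
      integral_const, probReal_univ, one_smul]
    linarith [h (-m)]
  filter_upwards [(integral_eq_zero_iff_of_nonneg hnn (hBW.integrable_comp hg)).mp hzero]
    with ω hω
  have : min (W ω) (-m) = -m := by simpa [sub_eq_zero, eq_comm] using hω
  exact neg_le.mp (this ▸ min_le_left (W ω) (-m))

theorem intQuantile_le_mul (hB : PosBounded P Z a b) {t x₁ : ℝ} (ht : 0 ≤ t)
    (h : ∀ r ∈ Ioc 0 t, qfExt P Z a r ≤ x₁) : intQuantile P Z a t ≤ x₁ * t := by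
  have := setIntegral_mono_on (hB.intervalIntegrable_qfExt 0 t).1
    (integrableOn_const measure_Ioc_lt_top.ne) measurableSet_Ioc h
  rwa [setIntegral_const, Real.volume_real_Ioc_of_le ht, sub_zero, smul_eq_mul, mul_comm,
    ← intervalIntegral.integral_of_le ht] at this

theorem mul_le_intQuantile (hB : PosBounded P Z a b) {t x₀ : ℝ} (ht : 0 ≤ t)
    (h : ∀ r ∈ Ioc 0 t, x₀ ≤ qfExt P Z a r) : x₀ * t ≤ intQuantile P Z a t := by
  have := setIntegral_mono_on (integrableOn_const measure_Ioc_lt_top.ne)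
    (hB.intervalIntegrable_qfExt 0 t).1 measurableSet_Ioc h
  rwa [setIntegral_const, Real.volume_real_Ioc_of_le ht, sub_zero, smul_eq_mul, mul_comm,
    ← intervalIntegral.integral_of_le ht] at this

theorem ES_eq (hB : PosBounded P Z a b) {p : ℝ} (hp : p ∈ Ico (0:ℝ) 1) :
    ES P p Z = -(1 / (1 - p)) * intQuantile P Z a (1 - p) := by
  rw [ES, if_pos hp.2, intQuantile, intervalIntegral.integral_congr_ae (g := qfExt P Z a)
    (Eventually.of_forall fun r hr => ?_)]
  rw [uIoc_of_le (by linarith [hp.2])] at hr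
  exact (hB.qfExt_eq ⟨hr.1, hr.2.trans (by linarith [hp.1])⟩).symm

theorem ES_mem_Icc (hB : PosBounded P Z a b) {p : ℝ} (hp : p ∈ Icc (0:ℝ) 1) :
    ES P p Z ∈ Icc (-b) (-a) := by
  rcases hp.2.lt_or_eq with hp1 | rfl
  · have ht : 0 < 1 - p := by linarith
    have hlo := hB.mul_le_intQuantile ht.le fun r _ => (hB.qfExt_mem_Icc r).1
    have hhi := hB.intQuantile_le_mul ht.le fun r _ => (hB.qfExt_mem_Icc r).2
    rw [hB.ES_eq ⟨hp.1, hp1⟩, neg_mul, one_div_mul_eq_div]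
    constructor
    · rw [neg_le_neg_iff, div_le_iff₀ ht]
      exact hhi
    · rw [neg_le_neg_iff, le_div_iff₀ ht]
      exact hlo
  · rw [ES, if_neg (lt_irrefl 1)]
    exact hB.rhoW_mem_Icc

theorem ES_neg (hB : PosBounded P Z a b) {p : ℝ} (hp : p ∈ Icc (0:ℝ) 1) : ES P p Z < 0 :=
  (hB.ES_mem_Icc hp).2.trans_lt (neg_neg_of_pos hB.pos)

theorem ES_le_rhoW (hB : PosBounded P Z a b) {p : ℝ} (hp : p ∈ Ico (0:ℝ) 1) :
    ES P p Z ≤ rhoW P Z := by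
  have ht : 0 < 1 - p := by linarith [hp.2]
  refine le_csInf hB.rhoW_set_nonempty fun m (hm : ∀ᵐ ω ∂P, -Z ω ≤ m) => ?_
  have := hB.mul_le_intQuantile ht.le fun r hr => by
    rw [hB.qfExt_eq ⟨hr.1, hr.2.trans (by linarith [hp.1])⟩]
    exact hB.le_qf (hm.mono fun ω hω => neg_le.mp hω) ⟨hr.1, hr.2.trans (by linarith [hp.1])⟩
  rw [hB.ES_eq hp, neg_mul, one_div_mul_eq_div, neg_le, le_div_iff₀ ht]
  exact this

/-- The average of the increasing function `qfExt` over `[0, t]` increases with `t`. -/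
theorem intQuantile_mul_le_mul_intQuantile (hB : PosBounded P Z a b) {t t' : ℝ} (ht' : 0 ≤ t')
    (htt' : t' ≤ t) : t * intQuantile P Z a t' ≤ t' * intQuantile P Z a t := by
  have hsplit : intQuantile P Z a t
      = intQuantile P Z a t' + ∫ r in t'..t, qfExt P Z a r :=
    (intervalIntegral.integral_add_adjacent_intervals (hB.intervalIntegrable_qfExt 0 t')
      (hB.intervalIntegrable_qfExt t' t)).symm
  have h1 : intQuantile P Z a t' ≤ qfExt P Z a t' * t' :=
    hB.intQuantile_le_mul ht' fun r hr => hB.monotone_qfExt hr.2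
  have h2 : (t - t') * qfExt P Z a t' ≤ ∫ r in t'..t, qfExt P Z a r := by
    have := intervalIntegral.integral_mono_on htt' intervalIntegrable_const
      (hB.intervalIntegrable_qfExt t' t) fun r hr => hB.monotone_qfExt hr.1
    rwa [intervalIntegral.integral_const, smul_eq_mul] at this
  nlinarith

theorem monotoneOn_ES (hB : PosBounded P Z a b) : MonotoneOn (fun p => ES P p Z) (Icc 0 1) := by
  intro p hp p' hp' hpp'
  rcases hp'.2.lt_or_eq with hp'1 | rfl
  · have ht : 0 < 1 - p' := by linarith
    simp only [hB.ES_eq ⟨hp.1, hpp'.trans_lt hp'1⟩, hB.ES_eq ⟨hp'.1, hp'1⟩, neg_mul,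
      one_div_mul_eq_div, neg_le_neg_iff]
    rw [div_le_div_iff₀ ht (by linarith)]
    linarith [hB.intQuantile_mul_le_mul_intQuantile ht.le (by linarith : 1 - p' ≤ 1 - p)]
  · rcases hp.2.lt_or_eq with hp1 | rfl
    · show ES P p Z ≤ ES P 1 Z
      rw [show ES P 1 Z = rhoW P Z by rw [ES, if_neg (lt_irrefl 1)]]
      exact hB.ES_le_rhoW ⟨hp.1, hp1⟩
    · exact le_rfl

theorem qf_const_mul (hB : PosBounded P Z a b) {s : ℝ} (hs : 0 < s) {r : ℝ}
    (hr : r ∈ Ioc (0:ℝ) 1) : qf P (fun ω => s * Z ω) r = s * qf P Z r := by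
  refine eq_of_forall_ge_iff fun x => ?_
  have hset : {ω | s * Z ω ≤ x} = {ω | Z ω ≤ x / s} := by
    ext ω
    simp only [mem_ofPred_eq, le_div_iff₀ hs, mul_comm s]
  rw [(hB.const_mul hs).qf_le_iff hr, ← le_div_iff₀' hs, hB.qf_le_iff hr,
    ← toReal_measure_le_eq_cdf (hB.const_mul hs).measurable,
    ← toReal_measure_le_eq_cdf hB.measurable, hset]

theorem ES_const_mul (hB : PosBounded P Z a b) {s : ℝ} (hs : 0 < s) {p : ℝ}
    (hp : p ∈ Ico (0:ℝ) 1) : ES P p (fun ω => s * Z ω) = s * ES P p Z := by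
  rw [ES, ES, if_pos hp.2, if_pos hp.2, intervalIntegral.integral_congr_ae
    (g := fun r => s * qf P Z r) (Eventually.of_forall fun r hr => ?_),
    intervalIntegral.integral_const_mul]
  · ring
  rw [uIoc_of_le (by linarith [hp.2])] at hr
  exact hB.qf_const_mul hs ⟨hr.1, hr.2.trans (by linarith [hp.1])⟩

end PosBounded

end ExpectedShortfall

section Abel

theorem exists_ae_eq_Ioc_of_isLowerSet {L : Set ℝ} (hL : IsLowerSet L) :
    ∃ e ∈ Icc (0:ℝ) 1, (Ioc 0 1 ∩ L : Set ℝ) =ᵐ[volume] (Ioc 0 e : Set ℝ) := by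
  set S := Ioc (0:ℝ) 1 ∩ L
  rcases S.eq_empty_or_nonempty with hS | hne
  · exact ⟨0, ⟨le_rfl, zero_le_one⟩, by rw [hS, Ioc_self]; rfl⟩
  have hbdd : BddAbove S := ⟨1, fun r hr => hr.1.2⟩
  obtain ⟨r₀, hr₀⟩ := hne
  refine ⟨sSup S,
    ⟨hr₀.1.1.le.trans (le_csSup hbdd hr₀), csSup_le ⟨r₀, hr₀⟩ fun r hr => hr.1.2⟩,
    ?_⟩
  have hsub : S ⊆ Ioc 0 (sSup S) := fun r hr => ⟨hr.1.1, le_csSup hbdd hr⟩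
  have hsup : Ioo 0 (sSup S) ⊆ S := by
    rintro r ⟨hr0, hrS⟩
    obtain ⟨s, hs, hrs⟩ := exists_lt_of_lt_csSup ⟨r₀, hr₀⟩ hrS
    exact ⟨⟨hr0, hrs.le.trans hs.1.2⟩, hL hrs.le hs.2⟩
  exact hsub.eventuallyLE.antisymm (Ioo_ae_eq_Ioc.symm.le.trans hsup.eventuallyLE)

/-- Continuous form of Abel's inequality. -/
theorem intervalIntegral_antitone_mul_nonneg {h δ : ℝ → ℝ} (hh : Antitone h)
    (hh0 : ∀ r, 0 ≤ h r) (hδ : IntervalIntegrable δ volume 0 1)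
    (hpart : ∀ t ∈ Icc (0:ℝ) 1, 0 ≤ ∫ r in (0:ℝ)..t, δ r) :
    0 ≤ ∫ r in (0:ℝ)..1, h r * δ r := by
  set μ := volume.restrict (Ioc (0:ℝ) 1)
  set ν := volume.restrict (Ioc 0 (h 0))
  -- layer cake: `h r * δ r = ∫ u in (0, h 0], 1_{u < h r} δ r`
  set F : ℝ → ℝ → ℝ := fun r u => if u < h r then δ r else 0
  have hF : Integrable (Function.uncurry F) (μ.prod ν) := by
    refine (hδ.1.norm.comp_fst ν).mono' ?_ (Eventually.of_forall fun p => ?_)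
    · have hset : MeasurableSet {p : ℝ × ℝ | p.2 < h p.1} :=
        measurableSet_lt measurable_snd (hh.measurable.comp measurable_fst)
      convert (hδ.1.aestronglyMeasurable.comp_fst (ν := ν)).indicator hset using 1
      ext p
      simp only [Function.uncurry, F, indicator_apply, mem_ofPred_eq]
    · simp only [Function.uncurry, F]
      split_ifs <;> simp
  have hlayer : ∀ r ∈ Ioc (0:ℝ) 1, h r * δ r = ∫ u, F r u ∂ν := by
    intro r hr
    have hind : ∀ u, F r u = (Iio (h r)).indicator (fun _ => δ r) u := fun u => by
      simp only [F, indicator_apply, mem_Iio]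
    have hinter : Ioc 0 (h 0) ∩ Iio (h r) = Ioo 0 (h r) := by
      ext u
      simp only [mem_inter_iff, mem_Ioc, mem_Iio, mem_Ioo]
      exact ⟨fun hu => ⟨hu.1.1, hu.2⟩,
        fun hu => ⟨⟨hu.1, hu.2.le.trans (hh hr.1.le)⟩, hu.2⟩⟩
    simp only [ν, hind, setIntegral_indicator measurableSet_Iio, hinter, setIntegral_const,
      Real.volume_real_Ioo, sub_zero, max_eq_left (hh0 r), smul_eq_mul]
  have hslice : ∀ u, 0 ≤ ∫ r, F r u ∂μ := by
    intro u
    obtain ⟨e, he, hae⟩ := exists_ae_eq_Ioc_of_isLowerSet (L := {r | u < h r})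
      fun r r' hrr' hr => hr.trans_le (hh hrr')
    have hind : ∀ r, F r u = {r | u < h r}.indicator δ r := fun r => by
      simp only [F, indicator_apply, mem_ofPred_eq]
    simp only [μ, hind]
    rw [setIntegral_indicator (f := δ) (measurableSet_lt measurable_const hh.measurable),
      setIntegral_congr_set hae, ← intervalIntegral.integral_of_le he.1]
    exact hpart e he
  rw [intervalIntegral.integral_of_le zero_le_one, setIntegral_congr_fun measurableSet_Ioc hlayer,
    integral_integral_swap hF]
  exact integral_nonneg hslice

end Abel

section ConcaveComparison

theorem sub_le_mul_sub_of_antitoneOn {s : Set ℝ} (hs : s.OrdConnected) {φ φ' : ℝ → ℝ}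
    (hd : ∀ z ∈ s, HasDerivAt φ (φ' z) z) (hanti : AntitoneOn φ' s) {y z : ℝ}
    (hy : y ∈ s) (hz : z ∈ s) : φ z - φ y ≤ φ' y * (z - y) := by
  have hcont : ∀ {x w}, x ∈ s → w ∈ s → ContinuousOn φ (Icc x w) := fun hx hw t ht =>
    (hd t (hs.out hx hw ht)).continuousAt.continuousWithinAt
  rcases lt_trichotomy y z with hyz | rfl | hzy
  · obtain ⟨ξ, hξ, hslope⟩ := exists_hasDerivAt_eq_slope φ φ' hyz (hcont hy hz)
      fun t ht => hd t (hs.out hy hz (Ioo_subset_Icc_self ht))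
    have : φ' ξ ≤ φ' y := hanti hy (hs.out hy hz (Ioo_subset_Icc_self hξ)) hξ.1.le
    rw [eq_div_iff (sub_pos.mpr hyz).ne'] at hslope
    nlinarith
  · simp
  · obtain ⟨ξ, hξ, hslope⟩ := exists_hasDerivAt_eq_slope φ φ' hzy (hcont hz hy)
      fun t ht => hd t (hs.out hz hy (Ioo_subset_Icc_self ht))
    have : φ' y ≤ φ' ξ := hanti (hs.out hz hy (Ioo_subset_Icc_self hξ)) hy hξ.2.le
    rw [eq_div_iff (sub_pos.mpr hzy).ne'] at hslope
    nlinarith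

variable {P : Measure Ω} [IsProbabilityMeasure P] {Z W : Ω → ℝ} {a b : ℝ}

theorem PosBounded.integral_comp_le_of_intQuantile_le (hBZ : PosBounded P Z a b)
    (hBW : PosBounded P W a b)
    (hA : ∀ t ∈ Icc (0:ℝ) 1, intQuantile P Z a t ≤ intQuantile P W a t)
    {φ φ' : ℝ → ℝ} (hφ : Continuous φ) (hd : ∀ z ∈ Icc a b, HasDerivAt φ (φ' z) z)
    (hpos : ∀ z ∈ Icc a b, 0 ≤ φ' z) (hanti : AntitoneOn φ' (Icc a b)) :
    ∫ ω, φ (Z ω) ∂P ≤ ∫ ω, φ (W ω) ∂P := by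
  set QZ := qfExt P Z a
  set QW := qfExt P W a
  have hQZ := hBZ.qfExt_mem_Icc
  have hQW := hBW.qfExt_mem_Icc
  have hh : Antitone fun r => φ' (QW r) :=
    fun r r' hrr' => hanti (hQW r) (hQW r') (hBW.monotone_qfExt hrr')
  have hδ : ∀ t, IntervalIntegrable (fun r => QW r - QZ r) volume 0 t := fun t =>
    (hBW.intervalIntegrable_qfExt 0 t).sub (hBZ.intervalIntegrable_qfExt 0 t)
  have hhδ : IntervalIntegrable (fun r => φ' (QW r) * (QW r - QZ r)) volume 0 1 :=
    (intervalIntegrable_iff_integrableOn_Ioc_of_le zero_le_one).mpr <|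
      (hδ 1).1.bdd_mul hh.measurable.aestronglyMeasurable (c := φ' a) <|
        Eventually.of_forall fun r => by
          rw [Real.norm_of_nonneg (hpos _ (hQW r))]
          exact hanti ⟨le_rfl, hBW.le⟩ (hQW r) (hQW r).1
  have hcross : 0 ≤ ∫ r in (0:ℝ)..1, φ' (QW r) * (QW r - QZ r) := by
    refine intervalIntegral_antitone_mul_nonneg hh (fun r => hpos _ (hQW r)) (hδ 1) fun t ht => ?_
    rw [intervalIntegral.integral_sub (hBW.intervalIntegrable_qfExt 0 t)
      (hBZ.intervalIntegrable_qfExt 0 t)]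
    exact sub_nonneg.mpr (hA t ht)
  have htangent : ∀ r, φ (QZ r) - φ (QW r) ≤ -(φ' (QW r) * (QW r - QZ r)) := fun r => by
    have := sub_le_mul_sub_of_antitoneOn ordConnected_Icc hd hanti (hQW r) (hQZ r)
    linarith
  have hφZ := hBZ.intervalIntegrable_comp_qfExt hφ 0 1
  have hφW := hBW.intervalIntegrable_comp_qfExt hφ 0 1
  have := intervalIntegral.integral_mono_on zero_le_one (hφZ.sub hφW) hhδ.neg
    fun r _ => htangent r
  rw [intervalIntegral.integral_sub hφZ hφW, Pi.neg_def, intervalIntegral.integral_neg] at this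
  rw [hBZ.integral_comp_eq hφ, hBW.integral_comp_eq hφ]
  linarith

end ConcaveComparison

section ExpUtility

open Real

variable {c : ℝ}

theorem hasDerivAt_exp_mul (c x : ℝ) :
    HasDerivAt (fun x => exp (c * x)) (c * exp (c * x)) x := by
  simpa [mul_comm] using ((hasDerivAt_id x).const_mul c).exp

theorem RA_exp_mul (hc : c ≠ 0) (x : ℝ) : RA (fun x => exp (c * x)) x = -c := by
  have h1 : deriv (fun x => exp (c * x)) = fun x => c * exp (c * x) :=
    funext fun x => (hasDerivAt_exp_mul c x).deriv
  rw [RA, h1, ((hasDerivAt_exp_mul c x).const_mul c).deriv]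
  field_simp

theorem RA_exp_mul_le_iff (hc : c ≠ 0) {u : ℝ → ℝ} {x : ℝ} (hu : 0 < deriv u x) :
    RA (fun x => exp (c * x)) x ≤ RA u x ↔ deriv (deriv u) x ≤ c * deriv u x := by
  rw [RA_exp_mul hc, RA, le_div_iff₀ hu]
  constructor <;> intro h <;> linarith

theorem antitone_deriv_mul_exp_neg (hc : c ≠ 0) {u : ℝ → ℝ} (hu : IsUtility univ u)
    (hRA : ∀ x, RA (fun x => exp (c * x)) x ≤ RA u x) :
    Antitone fun x => deriv u x * exp (-(c * x)) := by
  have hd : ∀ x, HasDerivAt (fun x => deriv u x * exp (-(c * x)))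
      ((deriv (deriv u) x - c * deriv u x) * exp (-(c * x))) x := fun x => by
    have := (hu.2.1 x trivial).hasDerivAt.mul (hasDerivAt_exp_mul (-c) x)
    simp only [neg_mul] at this
    exact this.congr_deriv (by ring)
  refine antitone_of_deriv_nonpos (fun x => (hd x).differentiableAt) fun x => ?_
  rw [(hd x).deriv]
  exact mul_nonpos_of_nonpos_of_nonneg
    (sub_nonpos.mpr ((RA_exp_mul_le_iff hc (hu.2.2 x trivial)).mp (hRA x))) (exp_pos _).le

section CompExp

variable {φ φ' : ℝ → ℝ}

theorem deriv_comp_exp_mul (hd : ∀ z, HasDerivAt φ (φ' z) z) :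
    deriv (fun x => φ (exp (c * x))) = fun x => φ' (exp (c * x)) * (c * exp (c * x)) :=
  funext fun x => ((hd _).comp x (hasDerivAt_exp_mul c x)).deriv

theorem hasDerivAt_deriv_comp_exp_mul (hd' : Differentiable ℝ φ') (x : ℝ) :
    HasDerivAt (fun x => φ' (exp (c * x)) * (c * exp (c * x)))
      (deriv φ' (exp (c * x)) * (c * exp (c * x)) * (c * exp (c * x))
        + φ' (exp (c * x)) * (c * (c * exp (c * x)))) x :=
  ((hd' _).hasDerivAt.comp x (hasDerivAt_exp_mul c x)).mul ((hasDerivAt_exp_mul c x).const_mul c)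

theorem isUtility_comp_exp_mul (hc : 0 < c) (hd : ∀ z, HasDerivAt φ (φ' z) z)
    (hd' : Differentiable ℝ φ') (hpos : ∀ z, 0 < φ' z) :
    IsUtility univ fun x => φ (exp (c * x)) := by
  refine ⟨fun x _ => ((hd _).comp x (hasDerivAt_exp_mul c x)).differentiableAt,
    fun x _ => ?_, fun x _ => ?_⟩ <;> rw [deriv_comp_exp_mul hd]
  · exact (hasDerivAt_deriv_comp_exp_mul hd' x).differentiableAt
  · have := hpos (exp (c * x))
    positivity

theorem RA_exp_mul_le_RA_comp (hc : 0 < c) (hd : ∀ z, HasDerivAt φ (φ' z) z)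
    (hd' : Differentiable ℝ φ') (hpos : ∀ z, 0 < φ' z) (hanti : Antitone φ') (x : ℝ) :
    RA (fun x => exp (c * x)) x ≤ RA (fun x => φ (exp (c * x))) x := by
  have hpos' := hpos (exp (c * x))
  rw [RA_exp_mul_le_iff hc.ne' (by rw [deriv_comp_exp_mul hd]; positivity),
    deriv_comp_exp_mul hd, (hasDerivAt_deriv_comp_exp_mul hd' x).deriv]
  have : deriv φ' (exp (c * x)) * (c * exp (c * x)) * (c * exp (c * x)) ≤ 0 :=
    mul_nonpos_of_nonpos_of_nonneg (mul_nonpos_of_nonpos_of_nonneg hanti.deriv_nonpos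
      (by positivity)) (by positivity)
  linarith

end CompExp

def softMin (ε k z : ℝ) : ℝ := k - ε * log (1 + exp ((k - z) / ε))

variable {ε k : ℝ}

theorem hasDerivAt_softMin (hε : ε ≠ 0) (z : ℝ) :
    HasDerivAt (softMin ε k) (1 + exp ((z - k) / ε))⁻¹ z := by
  have hw : HasDerivAt (fun z => (k - z) / ε) (-1 / ε) z := by
    simpa using ((hasDerivAt_id z).const_sub k).div_const ε
  refine (((hw.exp.const_add 1).log (by positivity)).const_mul ε |>.const_sub k).congr_deriv ?_
  rw [show (z - k) / ε = -((k - z) / ε) by ring, exp_neg]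
  field_simp
  ring

theorem softMin_le_min (hε : 0 < ε) (z : ℝ) : softMin ε k z ≤ min z k := by
  have hw : (k - z) / ε ≤ log (1 + exp ((k - z) / ε)) := by
    rw [← log_exp ((k - z) / ε)]
    exact log_le_log (exp_pos _) (by rw [log_exp]; linarith [exp_pos ((k - z) / ε)])
  have hlog : 0 ≤ log (1 + exp ((k - z) / ε)) :=
    log_nonneg (by linarith [exp_pos ((k - z) / ε)])
  have hεw : ε * ((k - z) / ε) = k - z := by field_simp
  refine le_min ?_ ?_ <;> unfold softMin
  · nlinarith [mul_le_mul_of_nonneg_left hw hε.le]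
  · nlinarith [mul_nonneg hε.le hlog]

theorem min_sub_le_softMin (hε : 0 < ε) (z : ℝ) : min z k - ε * log 2 ≤ softMin ε k z := by
  set w := (k - z) / ε
  have hlog : log (1 + exp w) ≤ log 2 + max w 0 := by
    rw [← log_exp (max w 0), ← log_mul two_ne_zero (exp_pos _).ne']
    refine log_le_log (by positivity) ?_
    linarith [exp_le_exp.mpr (le_max_left w 0), exp_le_exp.mpr (le_max_right w 0), exp_zero]
  have hmax : ε * max w 0 = max (k - z) 0 := by
    rw [mul_max_of_nonneg _ _ hε.le, mul_zero, show ε * w = k - z by simp only [w]; field_simp]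
  have hmin : min z k = k - max (k - z) 0 := by
    rcases le_total z k with h | h
    · rw [min_eq_left h, max_eq_left (by linarith)]; ring
    · rw [min_eq_right h, max_eq_right (by linarith)]; ring
  unfold softMin
  nlinarith [mul_le_mul_of_nonneg_left hlog hε.le]

theorem differentiable_softMin (hε : ε ≠ 0) : Differentiable ℝ (softMin ε k) :=
  fun z => (hasDerivAt_softMin hε z).differentiableAt

theorem differentiable_deriv_softMin : Differentiable ℝ fun z => (1 + exp ((z - k) / ε))⁻¹ :=
  ((((differentiable_id.sub_const k).div_const ε).exp).const_add 1).inv fun _ => by positivity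

theorem antitone_deriv_softMin (hε : 0 < ε) : Antitone fun z => (1 + exp ((z - k) / ε))⁻¹ :=
  fun z z' hzz' => inv_anti₀ (by positivity) (by gcongr)

end ExpUtility

section ExpDominance

open Real

variable {P : Measure Ω} [IsProbabilityMeasure P] {X Y : Ω → ℝ} {a b c : ℝ}

theorem integral_min_exp_le_of_vSD (hc : 0 < c)
    (hBX : PosBounded P (fun ω => exp (c * X ω)) a b)
    (hBY : PosBounded P (fun ω => exp (c * Y ω)) a b)
    (hXY : vSD P univ (fun x => exp (c * x)) X Y) (k : ℝ) :
    ∫ ω, min (exp (c * X ω)) k ∂P ≤ ∫ ω, min (exp (c * Y ω)) k ∂P := by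
  refine le_of_forall_pos_le_add fun η hη => ?_
  have hlog2 : 0 < log 2 := log_pos one_lt_two
  set ε := η / log 2
  have hε : 0 < ε := div_pos hη hlog2
  have hd := hasDerivAt_softMin (k := k) hε.ne'
  have hpos : ∀ z, 0 < (1 + exp ((z - k) / ε))⁻¹ := fun z => by positivity
  have hsoft : Continuous (softMin ε k) := (differentiable_softMin hε.ne').continuous
  have hmin : Continuous fun z : ℝ => min z k := continuous_id.min continuous_const
  have hu := hXY _ (isUtility_comp_exp_mul hc hd differentiable_deriv_softMin hpos)
    (fun x _ => RA_exp_mul_le_RA_comp hc hd differentiable_deriv_softMin hpos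
      (antitone_deriv_softMin hε) x)
    (hBX.integrable_comp hsoft) (hBY.integrable_comp hsoft)
  have hX : ∫ ω, min (exp (c * X ω)) k ∂P
      ≤ ∫ ω, softMin ε k (exp (c * X ω)) ∂P + ε * log 2 := by
    have hint : Integrable (fun ω => softMin ε k (exp (c * X ω)) + ε * log 2) P :=
      (hBX.integrable_comp hsoft).add (integrable_const _)
    have := integral_mono (hBX.integrable_comp hmin) hint
      fun ω => by linarith [min_sub_le_softMin hε (k := k) (exp (c * X ω))]
    rwa [integral_add (hBX.integrable_comp hsoft) (integrable_const _), integral_const,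
      probReal_univ, one_smul] at this
  have hY := integral_mono (hBY.integrable_comp hsoft) (hBY.integrable_comp hmin)
    fun ω => softMin_le_min hε (k := k) (exp (c * Y ω))
  rw [div_mul_cancel₀ η hlog2.ne'] at hX
  linarith

theorem vSD_exp_of_intQuantile_le (hc : 0 < c)
    (hBX : PosBounded P (fun ω => exp (c * X ω)) a b)
    (hBY : PosBounded P (fun ω => exp (c * Y ω)) a b)
    (hA : ∀ t ∈ Icc (0:ℝ) 1, intQuantile P (fun ω => exp (c * X ω)) a t
      ≤ intQuantile P (fun ω => exp (c * Y ω)) a t) :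
    vSD P univ (fun x => exp (c * x)) X Y := by
  intro u hu hRA _ _
  have hψ := antitone_deriv_mul_exp_neg hc.ne' hu fun x => hRA x trivial
  have ha : 0 < a := hBX.pos
  -- `φ (e^{cx}) = u x` whenever `e^{cx} ≥ a/2`; the `max` only makes `φ` continuous on `ℝ`
  set φ : ℝ → ℝ := fun z => u (log (max z (a / 2)) / c)
  set φ' : ℝ → ℝ := fun z => deriv u (log z / c) * (z⁻¹ / c)
  have hφ : Continuous φ :=
    (show Differentiable ℝ u from fun x => hu.1 x trivial).continuous.comp <|
    ((continuous_id.max continuous_const).log fun z => by positivity).div_const c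
  have hd : ∀ z ∈ Icc a b, HasDerivAt φ (φ' z) z := fun z hz => by
    have hz0 : 0 < z := ha.trans_le hz.1
    refine ((hu.1 _ trivial).hasDerivAt.comp z ((hasDerivAt_log hz0.ne').div_const c))
      |>.congr_of_eventuallyEq ?_
    filter_upwards [eventually_gt_nhds (half_lt_self ha |>.trans_le hz.1)] with w hw
    simp only [φ, max_eq_left hw.le, Function.comp_apply]
  have hφ'ψ : ∀ z ∈ Icc a b, φ' z = deriv u (log z / c) * exp (-(c * (log z / c))) / c :=
    fun z hz => by
      rw [mul_div_cancel₀ _ hc.ne', exp_neg, exp_log (ha.trans_le hz.1)]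
      ring
  have hanti : AntitoneOn φ' (Icc a b) := fun z hz z' hz' hzz' => by
    rw [hφ'ψ z hz, hφ'ψ z' hz']
    exact div_le_div_of_nonneg_right (hψ (div_le_div_of_nonneg_right
      (log_le_log (ha.trans_le hz.1) hzz') hc.le)) hc.le
  have hpos : ∀ z ∈ Icc a b, 0 ≤ φ' z := fun z hz => by
    have := hu.2.2 (log z / c) trivial
    have := ha.trans_le hz.1
    positivity
  have hφexp : ∀ {Z : Ω → ℝ}, PosBounded P (fun ω => exp (c * Z ω)) a b →
      ∫ ω, φ (exp (c * Z ω)) ∂P = ∫ ω, u (Z ω) ∂P := fun hB =>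
    integral_congr_ae <| hB.ae_mem_Icc.mono fun ω hω => by
      simp only [φ, max_eq_left ((half_lt_self ha).le.trans hω.1), log_exp,
        mul_div_cancel_left₀ _ hc.ne']
  rw [← hφexp hBX, ← hφexp hBY]
  exact hBX.integral_comp_le_of_intQuantile_le hBY hA hφ hd hpos hanti

theorem ES_le_of_vSD_exp (hc : 0 < c) (hBX : PosBounded P (fun ω => exp (c * X ω)) a b)
    (hBY : PosBounded P (fun ω => exp (c * Y ω)) a b)
    (hXY : vSD P univ (fun x => exp (c * x)) X Y) {p : ℝ} (hp : p ∈ Icc (0:ℝ) 1) :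
    ES P p (fun ω => exp (c * Y ω)) ≤ ES P p (fun ω => exp (c * X ω)) := by
  have hmin := integral_min_exp_le_of_vSD hc hBX hBY hXY
  rcases hp.2.lt_or_eq with hp1 | rfl
  · rw [hBX.ES_eq ⟨hp.1, hp1⟩, hBY.ES_eq ⟨hp.1, hp1⟩]
    refine mul_le_mul_of_nonpos_left (hBX.intQuantile_le_of_integral_min_le hBY hmin
      ⟨by linarith, by linarith [hp.1]⟩) ?_
    have : 0 < 1 - p := by linarith
    rw [neg_nonpos]
    positivity
  · simp only [ES, lt_irrefl, if_false]
    exact hBX.rhoW_le_of_integral_min_le hBY hmin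

theorem vSD_exp_of_ES_le (hc : 0 < c) (hBX : PosBounded P (fun ω => exp (c * X ω)) a b)
    (hBY : PosBounded P (fun ω => exp (c * Y ω)) a b)
    (hES : ∀ p ∈ Ico (0:ℝ) 1,
      ES P p (fun ω => exp (c * Y ω)) ≤ ES P p (fun ω => exp (c * X ω))) :
    vSD P univ (fun x => exp (c * x)) X Y := by
  refine vSD_exp_of_intQuantile_le hc hBX hBY fun t ht => ?_
  rcases ht.1.eq_or_lt with rfl | ht0
  · simp [intQuantile]
  · have hp : 1 - t ∈ Ico (0:ℝ) 1 := ⟨by linarith [ht.2], by linarith⟩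
    have h := hES _ hp
    rw [hBX.ES_eq hp, hBY.ES_eq hp, sub_sub_cancel, neg_mul, neg_mul, neg_le_neg_iff] at h
    exact le_of_mul_le_mul_left h (one_div_pos.mpr ht0)

end ExpDominance

section Representation

open Real

variable {P : Measure Ω} [IsProbabilityMeasure P] {Z W : Ω → ℝ} {a b a' b' c : ℝ}
  {g : ℝ → ℝ}

/-- For `Z = e^{cX}` this is `sup_{p ∈ [0,1]} (1/c) log (g(p) / ES_p(e^{cX}))`, the risk of `X`
under the single function `g`. -/
def esRisk (P : Measure Ω) (c : ℝ) (g : ℝ → ℝ) (Z : Ω → ℝ) : ℝ :=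
  ⨆ p : Icc (0:ℝ) 1, (1 / c) * log (g p / ES P p Z)

namespace PosBounded

theorem bddAbove_esRisk (hB : PosBounded P Z a b) (hc : 0 < c) (hg : MonotoneOn g (Icc 0 1))
    (hneg : ∀ p ∈ Icc (0:ℝ) 1, g p < 0) :
    BddAbove (range fun p : Icc (0:ℝ) 1 => (1 / c) * log (g p / ES P p Z)) := by
  refine ⟨(1 / c) * log (-g 0 / a), ?_⟩
  rintro _ ⟨p, rfl⟩
  have hES := hB.ES_mem_Icc p.2
  have hg0 : g 0 ≤ g p := hg ⟨le_rfl, zero_le_one⟩ p.2 p.2.1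
  have hgp := hneg p p.2
  refine mul_le_mul_of_nonneg_left (log_le_log (div_pos_of_neg_of_neg hgp (hB.ES_neg p.2)) ?_)
    (by positivity)
  rw [← neg_div_neg_eq]
  exact div_le_div₀ (by linarith) (by linarith) hB.pos (by linarith [hES.2])

theorem esRisk_le_esRisk (hBZ : PosBounded P Z a b) (hBW : PosBounded P W a' b') (hc : 0 < c)
    (hg : MonotoneOn g (Icc 0 1)) (hneg : ∀ p ∈ Icc (0:ℝ) 1, g p < 0)
    (hES : ∀ p ∈ Icc (0:ℝ) 1, ES P p W ≤ ES P p Z) : esRisk P c g W ≤ esRisk P c g Z := by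
  refine ciSup_mono (hBZ.bddAbove_esRisk hc hg hneg) fun p => ?_
  have hZ := hBZ.ES_neg p.2
  have hgp := hneg p p.2
  refine mul_le_mul_of_nonneg_left (log_le_log (div_pos_of_neg_of_neg hgp (hBW.ES_neg p.2)) ?_)
    (by positivity)
  rw [← neg_div_neg_eq, ← neg_div_neg_eq (g p)]
  exact div_le_div_of_nonneg_left (by linarith) (by linarith) (by linarith [hES p p.2])

theorem esRisk_le_esRisk_add (hBZ : PosBounded P Z a b) (hBW : PosBounded P W a b) (hc : 0 < c)
    (hg : MonotoneOn g (Icc 0 1)) (hneg : ∀ p ∈ Icc (0:ℝ) 1, g p < 0) :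
    esRisk P c g Z ≤ esRisk P c g W + (1 / c) * log (b / a) := by
  have : Nonempty (Icc (0:ℝ) 1) := ⟨⟨0, le_rfl, zero_le_one⟩⟩
  refine ciSup_le fun p => ?_
  have hZ := hBZ.ES_mem_Icc p.2
  have hW := hBW.ES_mem_Icc p.2
  have hZ0 := hBZ.ES_neg p.2
  have hW0 := hBW.ES_neg p.2
  have hgp := hneg p p.2
  have hsplit : g p / ES P p Z = g p / ES P p W * (ES P p W / ES P p Z) :=
    (div_mul_div_cancel₀ hW0.ne).symm
  have hratio : log (ES P p W / ES P p Z) ≤ log (b / a) := by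
    refine log_le_log (div_pos_of_neg_of_neg hW0 hZ0) ?_
    rw [← neg_div_neg_eq]
    exact div_le_div₀ (hBZ.pos.le.trans hBZ.le) (by linarith [hW.1]) hBZ.pos (by linarith [hZ.2])
  have hle : (1 / c) * log (g p / ES P p W) ≤ esRisk P c g W :=
    le_ciSup (hBW.bddAbove_esRisk hc hg hneg) p
  rw [hsplit, log_mul (div_pos_of_neg_of_neg hgp hW0).ne' (div_pos_of_neg_of_neg hW0 hZ0).ne',
    mul_add]
  have : 0 ≤ 1 / c := by positivity
  nlinarith [mul_le_mul_of_nonneg_left hratio this]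

theorem esRisk_mul_ES_self (hB : PosBounded P Z a b) (hc : c ≠ 0) (m : ℝ) :
    esRisk P c (fun p => exp (c * m) * ES P p Z) Z = m := by
  have hconst : ∀ p : Icc (0:ℝ) 1, (1 / c) * log (exp (c * m) * ES P p Z / ES P p Z) = m :=
    fun p => by
      rw [mul_div_assoc, div_self (hB.ES_neg p.2).ne, mul_one, log_exp]
      field_simp
  simp only [esRisk, hconst, ciSup_const]

theorem monotoneOn_exp_mul_ES (hB : PosBounded P Z a b) (m : ℝ) :
    MonotoneOn (fun p => exp m * ES P p Z) (Icc 0 1) :=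
  fun _ hp _ hq hpq => mul_le_mul_of_nonneg_left (hB.monotoneOn_ES hp hq hpq) (exp_pos m).le

theorem exp_mul_ES_neg (hB : PosBounded P Z a b) (m : ℝ) {p : ℝ} (hp : p ∈ Icc (0:ℝ) 1) :
    exp m * ES P p Z < 0 :=
  mul_neg_of_pos_of_neg (exp_pos m) (hB.ES_neg hp)

end PosBounded

/-- Without the upper bound this fails for junk values: `⨅` of a family unbounded below is `0`. -/
theorem _root_.Real.iInf_le_iInf_of_le_of_le_add_s7 {ι : Sort*} {f g : ι → ℝ} {K : ℝ}
    (h₁ : ∀ i, f i ≤ g i) (h₂ : ∀ i, g i ≤ f i + K) : ⨅ i, f i ≤ ⨅ i, g i := by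
  by_cases hf : BddBelow (range f)
  · exact ciInf_mono hf h₁
  · have hg : ¬ BddBelow (range g) := fun ⟨m, hm⟩ => hf ⟨m - K, by
      rintro _ ⟨i, rfl⟩
      linarith [hm ⟨i, rfl⟩, h₂ i]⟩
    rw [Real.iInf_of_not_bddBelow hf, Real.iInf_of_not_bddBelow hg]

end Representation

section MainTheorem

open Real

variable {P : Measure Ω} {X Y : Ω → ℝ} {c : ℝ} {ρ : (Ω → ℝ) → ℝ}

theorem MemX.add_const (hX : MemX P X) (s : ℝ) : MemX P fun ω => X ω + s := by
  obtain ⟨C, hC⟩ := hX.2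
  exact ⟨hX.1.add_const s, C + |s|, hC.mono fun ω hω =>
    (abs_add_le _ _).trans (add_le_add_left hω _)⟩

theorem MemX.exists_posBounded_exp (hX : MemX P X) (hY : MemX P Y) (c : ℝ) :
    ∃ a b, PosBounded P (fun ω => exp (c * X ω)) a b ∧
      PosBounded P (fun ω => exp (c * Y ω)) a b := by
  obtain ⟨CX, hCX⟩ := hX.2
  obtain ⟨CY, hCY⟩ := hY.2
  set C := |c| * max CX CY
  have hbound : ∀ {Z : Ω → ℝ}, Measurable Z → (∀ᵐ ω ∂P, |Z ω| ≤ max CX CY) →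
      PosBounded P (fun ω => exp (c * Z ω)) (exp (-C)) (exp C) := fun {Z} hZ hCZ =>
    ⟨(hZ.const_mul c).exp, exp_pos _, hCZ.mono fun ω hω => by
      have := abs_le.mp ((abs_mul c (Z ω)).trans_le (mul_le_mul_of_nonneg_left hω (abs_nonneg c)))
      exact ⟨exp_le_exp.mpr this.1, exp_le_exp.mpr this.2⟩⟩
  exact ⟨_, _, hbound hX.1 (hCX.mono fun _ h => h.trans (le_max_left _ _)),
    hbound hY.1 (hCY.mono fun _ h => h.trans (le_max_right _ _))⟩

variable [IsProbabilityMeasure P]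

theorem MemX.memL1_exp (hX : MemX P X) (c : ℝ) : MemL1 P univ (fun x => exp (c * x)) X := by
  obtain ⟨a, b, hB, -⟩ := hX.exists_posBounded_exp hX c
  exact ⟨hX.1, Eventually.of_forall fun _ => trivial, hB.integrable_comp continuous_id⟩

def esFamily (P : Measure Ω) (c : ℝ) (ρ : (Ω → ℝ) → ℝ) : Set (ℝ → ℝ) :=
  (fun Y p => exp (c * ρ Y) * ES P p fun ω => exp (c * Y ω)) '' {Y | MemX P Y}

/-- Shifting `X` by `s = esRisk(g_Y)(e^{cX}) - ρ(Y)` makes it dominate `Y`, so consistency and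
cash-additivity give `ρ(X) - s ≤ ρ(Y)`. -/
theorem le_esRisk_of_vSDConsistent (hc : 0 < c) (hρ : IsRiskMeasure P ρ)
    (hcons : VSDConsistent P univ (fun x => exp (c * x)) {X | MemX P X} ρ)
    (hX : MemX P X) (hY : MemX P Y) :
    ρ X ≤ esRisk P c (fun p => exp (c * ρ Y) * ES P p fun ω => exp (c * Y ω))
      (fun ω => exp (c * X ω)) := by
  obtain ⟨a, b, hBX, hBY⟩ := hX.exists_posBounded_exp hY c
  set T := esRisk P c (fun p => exp (c * ρ Y) * ES P p fun ω => exp (c * Y ω))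
    (fun ω => exp (c * X ω))
  have hXs := hX.add_const (T - ρ Y)
  obtain ⟨a', b', hBY', hBXs⟩ := hY.exists_posBounded_exp hXs c
  have hES : ∀ p ∈ Ico (0:ℝ) 1, ES P p (fun ω => exp (c * (X ω + (T - ρ Y))))
      ≤ ES P p (fun ω => exp (c * Y ω)) := fun p hp => by
    have hp' : p ∈ Icc (0:ℝ) 1 := Ico_subset_Icc_self hp
    have hterm : (1 / c) * log (exp (c * ρ Y) * ES P p (fun ω => exp (c * Y ω))
        / ES P p fun ω => exp (c * X ω)) ≤ T :=
      le_ciSup (hBX.bddAbove_esRisk hc (hBY.monotoneOn_exp_mul_ES _)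
        fun q hq => hBY.exp_mul_ES_neg _ hq) ⟨p, hp'⟩
    rw [one_div_mul_eq_div, div_le_iff₀' hc, log_le_iff_le_exp (div_pos_of_neg_of_neg
      (hBY.exp_mul_ES_neg _ hp') (hBX.ES_neg hp')), div_le_iff_of_neg (hBX.ES_neg hp')] at hterm
    have hshift : (fun ω => exp (c * (X ω + (T - ρ Y))))
        = fun ω => exp (c * (T - ρ Y)) * exp (c * X ω) := by
      ext ω
      rw [← exp_add]
      ring_nf
    rw [hshift, hBX.ES_const_mul (exp_pos _) hp, mul_sub, exp_sub, div_mul_eq_mul_div,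
      div_le_iff₀ (exp_pos _)]
    linarith
  have := hcons Y _ hY hXs (hY.memL1_exp c) (hXs.memL1_exp c) (vSD_exp_of_ES_le hc hBY' hBXs hES)
  rw [hρ.2 X hX] at this
  linarith

theorem eq_iInf_esRisk_esFamily (hc : 0 < c) (hρ : IsRiskMeasure P ρ)
    (hcons : VSDConsistent P univ (fun x => exp (c * x)) {X | MemX P X} ρ) (hX : MemX P X) :
    ρ X = ⨅ g : esFamily P c ρ, esRisk P c g fun ω => exp (c * X ω) := by
  obtain ⟨a, b, hBX, -⟩ := hX.exists_posBounded_exp hX c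
  have hle : ∀ g : esFamily P c ρ, ρ X ≤ esRisk P c g fun ω => exp (c * X ω) := by
    rintro ⟨_, Y, hY, rfl⟩
    exact le_esRisk_of_vSDConsistent hc hρ hcons hX hY
  have : Nonempty (esFamily P c ρ) := ⟨⟨_, X, hX, rfl⟩⟩
  refine le_antisymm (le_ciInf hle) ?_
  calc (⨅ g : esFamily P c ρ, esRisk P c g fun ω => exp (c * X ω))
      ≤ esRisk P c (fun p => exp (c * ρ X) * ES P p fun ω => exp (c * X ω))
          (fun ω => exp (c * X ω)) :=
        ciInf_le ⟨ρ X, by rintro _ ⟨g, rfl⟩; exact hle g⟩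
          (⟨_, X, hX, rfl⟩ : esFamily P c ρ)
    _ = ρ X := hBX.esRisk_mul_ES_self hc.ne' _

end MainTheorem

theorem statement7_general (P : Measure Ω) [IsProbabilityMeasure P]
    (c : ℝ) (hc : 0 < c)
    (ρ : (Ω → ℝ) → ℝ) (hρ : IsRiskMeasure P ρ) :
    VSDConsistent P Set.univ (fun x => Real.exp (c * x)) {X | MemX P X} ρ ↔
      ∃ 𝒢 : Set (ℝ → ℝ), 𝒢.Nonempty ∧
        (∀ g ∈ 𝒢, MonotoneOn g (Set.Icc 0 1) ∧ ∀ p ∈ Set.Icc (0:ℝ) 1, g p < 0) ∧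
        (∀ X : Ω → ℝ, MemX P X →
          ρ X = ⨅ g : 𝒢, ⨆ p : Set.Icc (0:ℝ) 1,
            (1 / c) *
              Real.log ((g : ℝ → ℝ) p.1 / ES P p.1 (fun ω => Real.exp (c * X ω)))) := by
  constructor
  · intro hcons
    refine ⟨esFamily P c ρ, ⟨_, 0, ⟨measurable_const, 0, by simp⟩, rfl⟩, ?_,
      fun X hX => eq_iInf_esRisk_esFamily hc hρ hcons hX⟩
    rintro _ ⟨Y, hY, rfl⟩
    obtain ⟨a, b, hB, -⟩ := hY.exists_posBounded_exp hY c
    exact ⟨hB.monotoneOn_exp_mul_ES _, fun p hp => hB.exp_mul_ES_neg _ hp⟩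
  · rintro ⟨𝒢, -, h𝒢, hrep⟩ X Y hX hY - - hXY
    obtain ⟨a, b, hBX, hBY⟩ := MemX.exists_posBounded_exp hX hY c
    rw [hrep X hX, hrep Y hY]
    exact Real.iInf_le_iInf_of_le_of_le_add_s7
      (fun g => hBX.esRisk_le_esRisk hBY hc (h𝒢 g g.2).1 (h𝒢 g g.2).2
        fun p hp => ES_le_of_vSD_exp hc hBX hBY hXY hp)
      (fun g => hBX.esRisk_le_esRisk_add hBY hc (h𝒢 g g.2).1 (h𝒢 g g.2).2)

/-- For `c > 0`, a monetary risk measure `ρ` is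
`𝔢_c`-SD-consistent iff it admits the representation
`ρ(X) = inf_{g ∈ 𝒢} sup_{p ∈ [0,1]} (1/c) log (g(p) / ES_p(e^{cX}))`
for a family `𝒢` of nondecreasing functions `g : [0,1] → (-∞,0)`. -/
theorem statement7 (P : Measure Ω) [IsProbabilityMeasure P] (hP : Atomless P)
    (c : ℝ) (hc : 0 < c)
    (ρ : (Ω → ℝ) → ℝ) (hρ : IsRiskMeasure P ρ) :
    VSDConsistent P Set.univ (fun x => Real.exp (c * x)) {X | MemX P X} ρ ↔
      ∃ 𝒢 : Set (ℝ → ℝ), 𝒢.Nonempty ∧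
        (∀ g ∈ 𝒢, MonotoneOn g (Set.Icc 0 1) ∧ ∀ p ∈ Set.Icc (0:ℝ) 1, g p < 0) ∧
        (∀ X : Ω → ℝ, MemX P X →
          ρ X = ⨅ g : 𝒢, ⨆ p : Set.Icc (0:ℝ) 1,
            (1 / c) *
              Real.log ((g : ℝ → ℝ) p.1 / ES P p.1 (fun ω => Real.exp (c * X ω)))) :=
  statement7_general P c hc ρ hρ

end Paper
end
end

section
/- Let v ∈ 𝒰(ℝ) be a threshold utility and let ρ be a v-Meyer risk measure on 𝒳 with acceptance set 𝒜_ρ := {Y ∈ 𝒳 : ρ(Y) ≤ 0}. Then ρ is the lower envelope of base risk measures: for every X ∈ 𝒳, ρ(X) = inf_{Y ∈ 𝒜_ρ} ρ_{Y,v}(X). -/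
open MeasureTheory Filter Set

noncomputable section

namespace Paper

variable {Ω : Type*} [MeasurableSpace Ω]

section Aux

variable {Ω : Type*} [MeasurableSpace Ω]

lemma utility_strictMono {u : ℝ → ℝ} (hu : IsUtility Set.univ u) : StrictMono u :=
  strictMono_of_deriv_pos (fun x => hu.2.2 x trivial)

lemma utility_continuous {u : ℝ → ℝ} (hu : IsUtility Set.univ u) : Continuous u := by
  rw [continuous_iff_continuousAt]
  exact fun x => (hu.1 x trivial).continuousAt

/-- A bounded r.v. is in `𝓛¹_v` for any utility `v`. -/
lemma memL1_of_memX (P : Measure Ω) [IsProbabilityMeasure P] {v : ℝ → ℝ}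
    (hv : IsUtility Set.univ v) {X : Ω → ℝ} (hX : MemX P X) :
    MemL1 P Set.univ v X := by
  obtain ⟨hXm, C, hC⟩ := hX
  refine ⟨hXm, Filter.Eventually.of_forall (fun _ => trivial), ?_⟩
  obtain ⟨M, hM⟩ := (isCompact_Icc (a := -C) (b := C)).exists_bound_of_continuousOn
    (utility_continuous hv).continuousOn
  refine (integrable_const M).mono' ?_ ?_
  · exact ((utility_continuous hv).measurable.comp hXm).aestronglyMeasurable
  · filter_upwards [hC] with ω hω
    exact hM (X ω) (abs_le.mp hω)

/-- a.s. domination implies v-SD. -/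
lemma vSD_of_ae_le (P : Measure Ω) {v : ℝ → ℝ} {X Y : Ω → ℝ}
    (h : ∀ᵐ ω ∂P, X ω ≤ Y ω) : vSD P Set.univ v X Y := by
  intro u hu _ hiX hiY
  refine integral_mono_ae hiX hiY ?_
  filter_upwards [h] with ω hω
  exact (utility_strictMono hu).monotone hω

lemma memX_add_const (P : Measure Ω) {X : Ω → ℝ} (hX : MemX P X) (c : ℝ) :
    MemX P (fun ω => X ω + c) := by
  obtain ⟨hXm, C, hC⟩ := hX
  refine ⟨hXm.add_const c, C + |c|, ?_⟩
  filter_upwards [hC] with ω hω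
  calc |X ω + c| ≤ |X ω| + |c| := abs_add_le _ _
    _ ≤ C + |c| := by linarith

end Aux

/-- Every `v`-Meyer risk measure `ρ` on `𝒳` is the lower
envelope of the base risk measures `ρ_{Y,v}` over its acceptance set
`𝒜_ρ = {Y ∈ 𝒳 : ρ(Y) ≤ 0}`. -/
theorem statement9 (P : Measure Ω) [IsProbabilityMeasure P] (hP : Atomless P)
    (v : ℝ → ℝ) (hv : IsUtility Set.univ v)
    (ρ : (Ω → ℝ) → ℝ) (hρ : IsRiskMeasure P ρ)
    (hcons : VSDConsistent P Set.univ v {X | MemX P X} ρ) :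
    ∀ X : Ω → ℝ, MemX P X →
      ρ X = sInf {r : ℝ | ∃ Y : Ω → ℝ, MemX P Y ∧ ρ Y ≤ 0 ∧ r = baseRM P v Y X} := by
  intro X hX
  set a := ρ X with ha
  set S := {r : ℝ | ∃ Y : Ω → ℝ, MemX P Y ∧ ρ Y ≤ 0 ∧ r = baseRM P v Y X} with hS
  have hL1X : ∀ c : ℝ, MemL1 P Set.univ v (fun ω => X ω + c) :=
    fun c => memL1_of_memX P hv (memX_add_const P hX c)
  -- key: for acceptable Y, every m with vSD Y (X+m) satisfies a ≤ m
  have key : ∀ Y : Ω → ℝ, MemX P Y → ρ Y ≤ 0 →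
      ∀ m : ℝ, vSD P Set.univ v Y (fun ω => X ω + m) → a ≤ m := by
    intro Y hY hY0 m hm
    have h1 : ρ (fun ω => X ω + m) ≤ ρ Y :=
      hcons Y (fun ω => X ω + m) hY (memX_add_const P hX m)
        (memL1_of_memX P hv hY) (hL1X m) hm
    have h2 : ρ (fun ω => X ω + m) = ρ X - m := hρ.2 X hX m
    linarith
  -- each such set of m's is nonempty
  have hne : ∀ Y : Ω → ℝ, MemX P Y →
      {m : ℝ | vSD P Set.univ v Y (fun ω => X ω + m)}.Nonempty := by
    intro Y hY
    obtain ⟨_, CY, hCY⟩ := hY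
    obtain ⟨_, CX, hCX⟩ := hX
    refine ⟨CY + CX, vSD_of_ae_le P ?_⟩
    filter_upwards [hCY, hCX] with ω h1 h2
    have := abs_le.mp h1
    have := abs_le.mp h2
    linarith
  -- lower bound: a ≤ every element of S
  have hlb : ∀ r ∈ S, a ≤ r := by
    rintro r ⟨Y, hY, hY0, rfl⟩
    exact le_csInf (hne Y hY) (fun m hm => key Y hY hY0 m hm)
  -- the witness Y₀ = X + a
  have hY0mem : MemX P (fun ω => X ω + a) := memX_add_const P hX a
  have hY0acc : ρ (fun ω => X ω + a) ≤ 0 := by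
    rw [hρ.2 X hX a]; simp [ha]
  have hbase : baseRM P v (fun ω => X ω + a) X = a := by
    refine le_antisymm ?_ ?_
    · exact csInf_le ⟨a, fun m hm => key _ hY0mem hY0acc m hm⟩
        (vSD_of_ae_le P (Filter.Eventually.of_forall (fun ω => le_refl _)))
    · exact le_csInf (hne _ hY0mem) (fun m hm => key _ hY0mem hY0acc m hm)
  have hmemS : a ∈ S := ⟨_, hY0mem, hY0acc, hbase.symm⟩
  exact le_antisymm (le_csInf ⟨a, hmemS⟩ hlb) (csInf_le ⟨a, hlb⟩ hmemS)


end Paper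
end
end
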